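/- arXiv:2206.01499 — 10 statements merged into one kernel-verified Lean document; each statement's English description precedes it below -/
import Mathlib

section
/- The t-SWAP gate is ternary unitary: the t-SWAP gate itself, its x₁-reshuffle and its x₂-reshuffle are all unitary matrices. -/
open Matrix

/-- A matrix is unitary if it is inverted by its conjugate transpose on both sides. -/
def IsUnitary {n : Type*} [Fintype n] [DecidableEq n] (M : Matrix n n ℂ) : Prop :=
  M * Mᴴ = 1 ∧ Mᴴ * M = 1

/-- Index type of a four-site gate: one `Fin d` leg per plaquette site
`(0,0), (1,0), (0,1), (1,1)`. -/
abbrev FourIdx (d : ℕ) := Fin d × Fin d × Fin d × Fin d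

/-- The x₁-reshuffle: `Ũ₁[(a₂,a₄,a₆,a₈),(a₁,a₃,a₅,a₇)] = U[(a₁,a₂,a₃,a₄),(a₅,a₆,a₇,a₈)]`. -/
def reshuffle1 {d : ℕ} (U : Matrix (FourIdx d) (FourIdx d) ℂ) :
    Matrix (FourIdx d) (FourIdx d) ℂ :=
  Matrix.of fun r c => U (c.1, r.1, c.2.1, r.2.1) (c.2.2.1, r.2.2.1, c.2.2.2, r.2.2.2)

/-- The x₂-reshuffle: `Ũ₂[(a₃,a₄,a₇,a₈),(a₁,a₂,a₅,a₆)] = U[(a₁,a₂,a₃,a₄),(a₅,a₆,a₇,a₈)]`. -/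
def reshuffle2 {d : ℕ} (U : Matrix (FourIdx d) (FourIdx d) ℂ) :
    Matrix (FourIdx d) (FourIdx d) ℂ :=
  Matrix.of fun r c => U (c.1, c.2.1, r.1, r.2.1) (c.2.2.1, c.2.2.2, r.2.2.1, r.2.2.2)

/-- A four-site gate is ternary unitary if it and both of its spatial reshuffles are unitary. -/
def TernaryUnitary {d : ℕ} (U : Matrix (FourIdx d) (FourIdx d) ℂ) : Prop :=
  IsUnitary U ∧ IsUnitary (reshuffle1 U) ∧ IsUnitary (reshuffle2 U)

/-- The t-SWAP gate, swapping opposite sites of the plaquette. -/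
def tSWAP (d : ℕ) : Matrix (FourIdx d) (FourIdx d) ℂ :=
  Matrix.of fun a b => if a = (b.2.2.2, b.2.2.1, b.2.1, b.1) then 1 else 0

/-- t-SWAP is self-adjoint. -/
lemma tSWAP_herm (d : ℕ) : (tSWAP d)ᴴ = tSWAP d := by
  ext i j
  obtain ⟨i1,i2,i3,i4⟩ := i; obtain ⟨j1,j2,j3,j4⟩ := j
  simp only [conjTranspose_apply, tSWAP, of_apply, apply_ite, star_one, star_zero]
  have : ((j1,j2,j3,j4) = ((i4:Fin d),i3,i2,i1)) = ((i1,i2,i3,i4) = ((j4:Fin d),j3,j2,j1)) := by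
    simp only [Prod.ext_iff, eq_iff_iff]; tauto
  simp only [this]
  split <;> simp_all

/-- t-SWAP squares to the identity. -/
lemma tSWAP_sq (d : ℕ) : tSWAP d * tSWAP d = 1 := by
  ext i j
  simp only [tSWAP, mul_apply, of_apply, ite_mul, one_mul, zero_mul]
  rw [Finset.sum_eq_single ((j.2.2.2, j.2.2.1, j.2.1, j.1) : FourIdx d)]
  · obtain ⟨i1,i2,i3,i4⟩ := i; obtain ⟨j1,j2,j3,j4⟩ := j
    simp [one_apply, Prod.ext_iff]
  · intro b _ hb
    obtain ⟨j1,j2,j3,j4⟩ := j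
    simp only [ite_eq_right_iff]
    intro _ h2
    exact absurd h2 (by simpa using hb)
  · simp

lemma tSWAP_unitary (d : ℕ) : IsUnitary (tSWAP d) := by
  constructor <;> rw [tSWAP_herm] <;> exact tSWAP_sq d

lemma resh1 (d : ℕ) : reshuffle1 (tSWAP d) = tSWAP d := by
  ext i j
  obtain ⟨i1,i2,i3,i4⟩ := i; obtain ⟨j1,j2,j3,j4⟩ := j
  simp only [reshuffle1, tSWAP, of_apply]
  have : (((j1:Fin d), i1, j2, i2) = ((i4:Fin d), j4, i3, j3)) =
      (((i1:Fin d),i2,i3,i4) = ((j4:Fin d),j3,j2,j1)) := by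
    simp only [Prod.ext_iff, eq_iff_iff]; tauto
  simp only [this]

lemma resh2 (d : ℕ) : reshuffle2 (tSWAP d) = tSWAP d := by
  ext i j
  obtain ⟨i1,i2,i3,i4⟩ := i; obtain ⟨j1,j2,j3,j4⟩ := j
  simp only [reshuffle2, tSWAP, of_apply]
  have : (((j1:Fin d), j2, i1, i2) = ((i4:Fin d), i3, j4, j3)) =
      (((i1:Fin d),i2,i3,i4) = ((j4:Fin d),j3,j2,j1)) := by
    simp only [Prod.ext_iff, eq_iff_iff]; tauto
  simp only [this]

/-- The t-SWAP gate is ternary unitary. -/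
theorem tSWAP_ternaryUnitary (d : ℕ) (hd : 1 ≤ d) : TernaryUnitary (tSWAP d) :=
  ⟨tSWAP_unitary d, by rw [resh1]; exact tSWAP_unitary d, by rw [resh2]; exact tSWAP_unitary d⟩
end

section
/- If H₁, H₂, V₁, V₂ are dual unitary two-site gates, then the layered plaquette gate U = V * H built from them is ternary unitary. -/
open Matrix

/-- Index type of a two-site gate. -/
abbrev TwoIdx (d : ℕ) := Fin d × Fin d

/-- Reshuffle of a two-site gate: `D̃[(a₂,a₄),(a₁,a₃)] = D[(a₁,a₂),(a₃,a₄)]`. -/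
def reshuffleD {d : ℕ} (D : Matrix (TwoIdx d) (TwoIdx d) ℂ) : Matrix (TwoIdx d) (TwoIdx d) ℂ :=
  Matrix.of fun r c => D (c.1, r.1) (c.2, r.2)

/-- A two-site gate is dual unitary if it and its reshuffle are unitary. -/
def DualUnitary {d : ℕ} (D : Matrix (TwoIdx d) (TwoIdx d) ℂ) : Prop :=
  IsUnitary D ∧ IsUnitary (reshuffleD D)

/-- The layered plaquette gate `U = V * H` built from horizontal gates `H₁, H₂`
and vertical gates `V₁, V₂`. -/
noncomputable def layered {d : ℕ} (H1 H2 V1 V2 : Matrix (TwoIdx d) (TwoIdx d) ℂ) :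
    Matrix (FourIdx d) (FourIdx d) ℂ :=
  (Matrix.of fun a b : FourIdx d =>
      V1 (a.1, a.2.2.1) (b.1, b.2.2.1) * V2 (a.2.1, a.2.2.2) (b.2.1, b.2.2.2)) *
  (Matrix.of fun a b : FourIdx d =>
      H1 (a.1, a.2.1) (b.1, b.2.1) * H2 (a.2.2.1, a.2.2.2) (b.2.2.1, b.2.2.2))

/-!
Every reshuffle of `V * H` is again a product of three gates, each a tensor product of two-site
gates up to a regrouping of the legs:
`Ũ₁ = (V₂ ⊗ 1) (H̃₁ ⊗ H̃₂) (V₁ᵀ ⊗ 1)` and `Ũ₂ = (1 ⊗ H₂ᵀ) (Ṽ₁ ⊗ Ṽ₂) (1 ⊗ H₁)`.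
Dual unitarity of the four gates makes every factor unitary.
-/

open scoped Kronecker

theorem isUnitary_iff_mem_unitaryGroup {n : Type*} [Fintype n] [DecidableEq n]
    {M : Matrix n n ℂ} : IsUnitary M ↔ M ∈ unitaryGroup n ℂ :=
  and_comm

namespace Matrix

variable {m n R : Type*} [Fintype m] [DecidableEq m] [Fintype n] [DecidableEq n]
  [CommRing R] [StarRing R]

theorem submatrix_equiv_mem_unitaryGroup {U : Matrix n n R} (hU : U ∈ unitaryGroup n R)
    (e₁ e₂ : m ≃ n) : U.submatrix e₁ e₂ ∈ unitaryGroup m R := by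
  rw [mem_unitaryGroup_iff, star_eq_conjTranspose, conjTranspose_submatrix, submatrix_mul_equiv,
    ← star_eq_conjTranspose, mem_unitaryGroup_iff.mp hU, submatrix_one_equiv]

theorem kronecker_submatrix_mem_unitaryGroup {k : Type*} [Fintype k] [DecidableEq k]
    {A : Matrix m m R} {B : Matrix n n R} (hA : A ∈ unitaryGroup m R)
    (hB : B ∈ unitaryGroup n R) (e₁ e₂ : k ≃ m × n) :
    (A ⊗ₖ B).submatrix e₁ e₂ ∈ unitaryGroup k R :=
  submatrix_equiv_mem_unitaryGroup (kronecker_mem_unitary hA hB) e₁ e₂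

end Matrix

section Plaquette

variable {d : ℕ}

def pairLegs12 : FourIdx d ≃ TwoIdx d × TwoIdx d := (Equiv.prodAssoc _ _ _).symm

def pairLegs13 : FourIdx d ≃ TwoIdx d × TwoIdx d where
  toFun a := ((a.1, a.2.2.1), (a.2.1, a.2.2.2))
  invFun p := (p.1.1, p.2.1, p.1.2, p.2.2)

theorem layered_eq (H1 H2 V1 V2 : Matrix (TwoIdx d) (TwoIdx d) ℂ) :
    layered H1 H2 V1 V2 =
      (V1 ⊗ₖ V2).submatrix pairLegs13 pairLegs13 * (H1 ⊗ₖ H2).submatrix pairLegs12 pairLegs12 :=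
  rfl

theorem reshuffle1_layered (H1 H2 V1 V2 : Matrix (TwoIdx d) (TwoIdx d) ℂ) :
    reshuffle1 (layered H1 H2 V1 V2) =
      (V2 ⊗ₖ 1).submatrix pairLegs12 pairLegs12 *
        (reshuffleD H1 ⊗ₖ reshuffleD H2).submatrix pairLegs13 pairLegs13 *
        (V1ᵀ ⊗ₖ 1).submatrix pairLegs12 pairLegs12 := by
  ext ⟨a₂, a₄, b₂, b₄⟩ ⟨a₁, a₃, b₁, b₃⟩
  simp only [reshuffle1, layered, reshuffleD, pairLegs12, pairLegs13, mul_apply, of_apply,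
    submatrix_apply, kroneckerMap_apply, one_apply, transpose_apply, Fintype.sum_prod_type,
    Equiv.coe_fn_mk, Equiv.prodAssoc_symm_apply, mul_ite, ite_mul, mul_one, mul_zero, zero_mul,
    Finset.sum_ite_eq, Finset.sum_ite_eq', Finset.mem_univ, if_true, Finset.sum_mul]
  refine Finset.sum_congr rfl fun _ _ => ?_
  rw [Finset.sum_comm]
  ac_rfl

theorem reshuffle2_layered (H1 H2 V1 V2 : Matrix (TwoIdx d) (TwoIdx d) ℂ) :
    reshuffle2 (layered H1 H2 V1 V2) =
      (1 ⊗ₖ H2ᵀ).submatrix pairLegs12 pairLegs12 *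
        (reshuffleD V1 ⊗ₖ reshuffleD V2).submatrix pairLegs13 pairLegs13 *
        (1 ⊗ₖ H1).submatrix pairLegs12 pairLegs12 := by
  ext ⟨a₃, a₄, b₃, b₄⟩ ⟨a₁, a₂, b₁, b₂⟩
  simp only [reshuffle2, layered, reshuffleD, pairLegs12, pairLegs13, mul_apply, of_apply,
    submatrix_apply, kroneckerMap_apply, one_apply, transpose_apply, Fintype.sum_prod_type,
    Equiv.coe_fn_mk, Equiv.prodAssoc_symm_apply, Prod.mk.injEq, ite_and, mul_ite, ite_mul,
    one_mul, mul_zero, zero_mul, Finset.sum_ite_eq, Finset.sum_ite_eq', Finset.sum_ite_irrel,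
    Finset.sum_const_zero, Finset.mem_univ, if_true, Finset.sum_mul]
  ac_rfl

end Plaquette

theorem layered_ternaryUnitary_general (d : ℕ)
    (H1 H2 V1 V2 : Matrix (TwoIdx d) (TwoIdx d) ℂ)
    (hH1 : DualUnitary H1) (hH2 : DualUnitary H2)
    (hV1 : DualUnitary V1) (hV2 : DualUnitary V2) :
    TernaryUnitary (layered H1 H2 V1 V2) := by
  simp only [DualUnitary, isUnitary_iff_mem_unitaryGroup] at hH1 hH2 hV1 hV2
  refine ⟨?_, ?_, ?_⟩ <;> rw [isUnitary_iff_mem_unitaryGroup]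
  · rw [layered_eq]
    exact mul_mem (kronecker_submatrix_mem_unitaryGroup hV1.1 hV2.1 _ _)
      (kronecker_submatrix_mem_unitaryGroup hH1.1 hH2.1 _ _)
  · rw [reshuffle1_layered]
    exact mul_mem (mul_mem (kronecker_submatrix_mem_unitaryGroup hV2.1 (one_mem _) _ _)
      (kronecker_submatrix_mem_unitaryGroup hH1.2 hH2.2 _ _))
      (kronecker_submatrix_mem_unitaryGroup (transpose_mem_unitaryGroup_iff.mpr hV1.1)
        (one_mem _) _ _)
  · rw [reshuffle2_layered]
    exact mul_mem (mul_mem (kronecker_submatrix_mem_unitaryGroup (one_mem _)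
        (transpose_mem_unitaryGroup_iff.mpr hH2.1) _ _)
      (kronecker_submatrix_mem_unitaryGroup hV1.2 hV2.2 _ _))
      (kronecker_submatrix_mem_unitaryGroup (one_mem _) hH1.1 _ _)

/-- The layered plaquette gate built from four dual unitary gates is ternary unitary. -/
theorem layered_ternaryUnitary (d : ℕ) (hd : 1 ≤ d)
    (H1 H2 V1 V2 : Matrix (TwoIdx d) (TwoIdx d) ℂ)
    (hH1 : DualUnitary H1) (hH2 : DualUnitary H2)
    (hV1 : DualUnitary V1) (hV2 : DualUnitary V2) :
    TernaryUnitary (layered H1 H2 V1 V2) :=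
  layered_ternaryUnitary_general d H1 H2 V1 V2 hH1 hH2 hV1 hV2
end

section
/- If D and D' are dual unitary two-site gates, then the cross plaquette gate built from D and D' is ternary unitary. -/
open Matrix

/-- The cross plaquette gate: `D` joins the opposite plaquette sites `(0,0),(1,1)`
and `D'` joins `(1,0),(0,1)`. -/
def cross {d : ℕ} (D D' : Matrix (TwoIdx d) (TwoIdx d) ℂ) :
    Matrix (FourIdx d) (FourIdx d) ℂ :=
  Matrix.of fun a b =>
    D (a.1, a.2.2.2) (b.1, b.2.2.2) * D' (a.2.1, a.2.2.1) (b.2.1, b.2.2.1)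


open Kronecker in
lemma kron_conjTranspose {n m : Type*} [Fintype n] [Fintype m]
    (A : Matrix n n ℂ) (B : Matrix m m ℂ) : (A ⊗ₖ B)ᴴ = Aᴴ ⊗ₖ Bᴴ := by
  ext ⟨a, b⟩ ⟨c, e⟩
  simp [Matrix.conjTranspose_apply, Matrix.kroneckerMap_apply, mul_comm]

open Kronecker in
lemma kron_unitary {n m : Type*} [Fintype n] [Fintype m] [DecidableEq n] [DecidableEq m]
    {A : Matrix n n ℂ} {B : Matrix m m ℂ} (hA : IsUnitary A) (hB : IsUnitary B) :
    IsUnitary (A ⊗ₖ B) := by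
  constructor <;> rw [kron_conjTranspose, ← Matrix.mul_kronecker_mul]
  · rw [hA.1, hB.1, Matrix.one_kronecker_one]
  · rw [hA.2, hB.2, Matrix.one_kronecker_one]

lemma submatrix_unitary {n α : Type*} [Fintype n] [Fintype α] [DecidableEq n] [DecidableEq α]
    {M : Matrix n n ℂ} (hM : IsUnitary M) (f g : α ≃ n) :
    IsUnitary (M.submatrix f g) := by
  constructor
  · rw [Matrix.conjTranspose_submatrix, Matrix.submatrix_mul_equiv, hM.1,
      Matrix.submatrix_one_equiv]
  · rw [Matrix.conjTranspose_submatrix, Matrix.submatrix_mul_equiv, hM.2,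
      Matrix.submatrix_one_equiv]

lemma transpose_unitary {n : Type*} [Fintype n] [DecidableEq n]
    {M : Matrix n n ℂ} (hM : IsUnitary M) : IsUnitary Mᵀ := by
  have h : Mᵀᴴ = Mᴴᵀ := by ext i j; simp
  constructor
  · rw [h, ← Matrix.transpose_mul, hM.2, Matrix.transpose_one]
  · rw [h, ← Matrix.transpose_mul, hM.1, Matrix.transpose_one]

/-- Reindexing bijection pairing sites `(1,4)` and `(2,3)`. -/
def e14 {d : ℕ} : FourIdx d ≃ (TwoIdx d × TwoIdx d) :=
  ⟨fun a => ((a.1, a.2.2.2), (a.2.1, a.2.2.1)),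
   fun p => (p.1.1, p.2.1, p.2.2, p.1.2), fun _ => rfl, fun _ => rfl⟩

/-- Reindexing bijection used for the row side of the reshuffles. -/
def eRow {d : ℕ} : FourIdx d ≃ (TwoIdx d × TwoIdx d) :=
  ⟨fun r => ((r.2.1, r.2.2.2), (r.1, r.2.2.1)),
   fun p => (p.2.1, p.1.1, p.2.2, p.1.2), fun _ => rfl, fun _ => rfl⟩

/-- Reindexing bijection used for the column side of the reshuffles. -/
def eCol {d : ℕ} : FourIdx d ≃ (TwoIdx d × TwoIdx d) :=
  ⟨fun c => ((c.1, c.2.2.1), (c.2.1, c.2.2.2)),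
   fun p => (p.1.1, p.2.1, p.1.2, p.2.2), fun _ => rfl, fun _ => rfl⟩

/-- The cross plaquette gate built from two dual unitary gates is ternary unitary. -/
theorem cross_ternaryUnitary (d : ℕ) (hd : 1 ≤ d)
    (D D' : Matrix (TwoIdx d) (TwoIdx d) ℂ)
    (hD : DualUnitary D) (hD' : DualUnitary D') :
    TernaryUnitary (cross D D') := by
  refine ⟨?_, ?_, ?_⟩
  · have h : cross D D' = (Matrix.kroneckerMap (· * ·) D D').submatrix e14 e14 := by
      ext ⟨a1, a2, a3, a4⟩ ⟨b1, b2, b3, b4⟩; rfl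
    rw [h]
    exact submatrix_unitary (kron_unitary hD.1 hD'.1) e14 e14
  · have h : reshuffle1 (cross D D') =
        (Matrix.kroneckerMap (· * ·) (reshuffleD D) (reshuffleD D')ᵀ).submatrix eRow eCol := by
      ext ⟨a1, a2, a3, a4⟩ ⟨b1, b2, b3, b4⟩; rfl
    rw [h]
    exact submatrix_unitary (kron_unitary hD.2 (transpose_unitary hD'.2)) eRow eCol
  · have h : reshuffle2 (cross D D') =
        (Matrix.kroneckerMap (· * ·) (reshuffleD D) (reshuffleD D')).submatrix eRow eCol := by
      ext ⟨a1, a2, a3, a4⟩ ⟨b1, b2, b3, b4⟩; rfl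
    rw [h]
    exact submatrix_unitary (kron_unitary hD.2 hD'.2) eRow eCol
end

section
/- Let U be a unitary four-site gate and z ∈ {0,1}×{0,1} a plaquette site. Then M_z is a contraction in the Frobenius (Hilbert–Schmidt) norm: ‖M_z(a)‖_F ≤ ‖a‖_F for every a : Matrix (Fin d) (Fin d) ℂ, where ‖b‖_F = sqrt(∑_{i,j} |b[i,j]|²). -/
open Matrix

/-- Component of a four-site index at the plaquette site `z ∈ {0,1} × {0,1}`. -/
def comp4 {d : ℕ} (z : Fin 2 × Fin 2) (a : FourIdx d) : Fin d :=
  if z = (0, 0) then a.1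
  else if z = (1, 0) then a.2.1
  else if z = (0, 1) then a.2.2.1
  else a.2.2.2

/-- The plaquette site opposite to `z`: `z̄ = (1,1) − z`. -/
def opp (z : Fin 2 × Fin 2) : Fin 2 × Fin 2 := (1 - z.1, 1 - z.2)

/-- The four-site operator acting as `a` on the leg of site `z` and as the identity
on the other three legs. -/
def siteOp4 {d : ℕ} (z : Fin 2 × Fin 2) (a : Matrix (Fin d) (Fin d) ℂ) :
    Matrix (FourIdx d) (FourIdx d) ℂ :=
  Matrix.of fun p q =>
    (if ∀ w : Fin 2 × Fin 2, w ≠ z → comp4 w p = comp4 w q then 1 else 0) *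
      a (comp4 z p) (comp4 z q)

/-- The map `M_z(a) = (1/d³) · Tr_{p \ z̄} [Uᴴ a_z U]`: partial trace over the
three legs other than `z̄` of the conjugation of `a_z` by `U`. -/
noncomputable def Mmap {d : ℕ} (U : Matrix (FourIdx d) (FourIdx d) ℂ) (z : Fin 2 × Fin 2)
    (a : Matrix (Fin d) (Fin d) ℂ) : Matrix (Fin d) (Fin d) ℂ :=
  Matrix.of fun i j =>
    (1 / (d : ℂ) ^ 3) * ∑ p : FourIdx d, ∑ q : FourIdx d,
      if comp4 (opp z) p = i ∧ comp4 (opp z) q = j ∧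
          (∀ w : Fin 2 × Fin 2, w ≠ opp z → comp4 w p = comp4 w q)
        then (Uᴴ * siteOp4 z a * U) p q else 0

/-- The Frobenius (Hilbert–Schmidt) norm of a matrix. -/
noncomputable def frobNorm {d : ℕ} (b : Matrix (Fin d) (Fin d) ℂ) : ℝ :=
  Real.sqrt (∑ i : Fin d, ∑ j : Fin d, ‖b i j‖ ^ 2)


/-! Conjugation by a unitary preserves the squared Hilbert–Schmidt norm, so
`‖Uᴴ a_z U‖² = ‖a ⊗ 1‖² = d³ ‖a‖²`. Each entry of a partial trace over a factor of
dimension `N` is a sum of `N` entries, so by Cauchy–Schwarz the partial trace multiplies the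
squared norm by at most `N = d³`. Altogether `‖M_z(a)‖² ≤ d⁻⁶ · d³ · d³ ‖a‖² = ‖a‖²`. -/

open scoped Kronecker

section FrobeniusNorm

variable {ι κ m n m' n' : Type*} [Fintype ι] [Fintype κ] [Fintype m] [Fintype n]
  [Fintype m'] [Fintype n']

noncomputable def frobNormSq (A : Matrix m n ℂ) : ℝ := ∑ i, ∑ j, ‖A i j‖ ^ 2

def partialTrace (B : Matrix (ι × κ) (ι × κ) ℂ) : Matrix ι ι ℂ :=
  of fun i j => ∑ k, B (i, k) (j, k)

lemma ofReal_frobNormSq (A : Matrix m n ℂ) : (frobNormSq A : ℂ) = trace (Aᴴ * A) := by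
  simp only [frobNormSq, trace, diag_apply, mul_apply, conjTranspose_apply, Complex.ofReal_sum,
    Complex.sq_norm, Complex.normSq_eq_conj_mul_self]
  exact Finset.sum_comm

lemma frobNormSq_smul (c : ℂ) (A : Matrix m n ℂ) :
    frobNormSq (c • A) = ‖c‖ ^ 2 * frobNormSq A := by
  simp only [frobNormSq, Matrix.smul_apply, smul_eq_mul, norm_mul, mul_pow, Finset.mul_sum]

lemma frobNormSq_submatrix_equiv (A : Matrix m n ℂ) (e : m' ≃ m) (f : n' ≃ n) :
    frobNormSq (A.submatrix e f) = frobNormSq A := by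
  simp only [frobNormSq, submatrix_apply]
  rw [e.sum_comp (fun i => ∑ j, ‖A i (f j)‖ ^ 2)]
  exact Finset.sum_congr rfl fun i _ => f.sum_comp (fun j => ‖A i j‖ ^ 2)

lemma frobNormSq_conjTranspose_mul_mul [DecidableEq n] (A : Matrix n n ℂ) {V : Matrix n n ℂ}
    (hV : V * Vᴴ = 1) : frobNormSq (Vᴴ * A * V) = frobNormSq A := by
  apply Complex.ofReal_injective
  rw [ofReal_frobNormSq, ofReal_frobNormSq]
  calc trace ((Vᴴ * A * V)ᴴ * (Vᴴ * A * V)) = trace (Vᴴ * (Aᴴ * (V * Vᴴ) * A) * V) := by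
        simp only [conjTranspose_mul, conjTranspose_conjTranspose, Matrix.mul_assoc]
    _ = trace (Aᴴ * A) := by
        rw [trace_mul_cycle, ← Matrix.mul_assoc, hV, Matrix.one_mul, Matrix.mul_one]

lemma frobNormSq_kronecker_one [DecidableEq κ] (a : Matrix ι ι ℂ) :
    frobNormSq (a ⊗ₖ (1 : Matrix κ κ ℂ)) = Fintype.card κ * frobNormSq a := by
  simp only [frobNormSq, kroneckerMap_apply, one_apply, mul_ite, mul_one, mul_zero,
    Fintype.sum_prod_type, apply_ite (fun x : ℂ => ‖x‖ ^ 2), norm_zero, zero_pow two_ne_zero,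
    Finset.sum_ite_eq, Finset.mem_univ, if_true, Finset.sum_const, Finset.card_univ,
    nsmul_eq_mul, Finset.mul_sum]

lemma frobNormSq_partialTrace_le (B : Matrix (ι × κ) (ι × κ) ℂ) :
    frobNormSq (partialTrace B) ≤ Fintype.card κ * frobNormSq B := by
  have cauchySchwarz (i j : ι) :
      ‖partialTrace B i j‖ ^ 2 ≤ Fintype.card κ * ∑ k, ‖B (i, k) (j, k)‖ ^ 2 :=
    calc ‖partialTrace B i j‖ ^ 2 ≤ (∑ k, ‖B (i, k) (j, k)‖) ^ 2 := by
          gcongr; exact norm_sum_le _ _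
      _ ≤ _ := sq_sum_le_card_mul_sum_sq
  have diagonal_le : ∑ i, ∑ j, ∑ k, ‖B (i, k) (j, k)‖ ^ 2 ≤ frobNormSq B := by
    rw [frobNormSq, Fintype.sum_prod_type]
    refine Finset.sum_le_sum fun i _ => ?_
    rw [Finset.sum_comm]
    refine Finset.sum_le_sum fun k _ => ?_
    rw [Fintype.sum_prod_type]
    exact Finset.sum_le_sum fun j _ =>
      Finset.single_le_sum (f := fun l => ‖B (i, k) (j, l)‖ ^ 2) (fun _ _ => by positivity)
        (Finset.mem_univ k)
  calc frobNormSq (partialTrace B) ≤ ∑ i, ∑ j, Fintype.card κ * ∑ k, ‖B (i, k) (j, k)‖ ^ 2 :=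
        Finset.sum_le_sum fun i _ => Finset.sum_le_sum fun j _ => cauchySchwarz i j
    _ ≤ Fintype.card κ * frobNormSq B := by
        simp only [← Finset.mul_sum]; gcongr

end FrobeniusNorm

lemma sum_sum_ite_eq_partialTrace {X ι κ : Type*} [Fintype X] [Fintype ι] [Fintype κ]
    [DecidableEq ι] [DecidableEq κ] (e : X ≃ ι × κ) (B : Matrix X X ℂ) (i j : ι) :
    (∑ p, ∑ q, if (e p).1 = i ∧ (e q).1 = j ∧ (e p).2 = (e q).2 then B p q else 0) =
      partialTrace (B.submatrix e.symm e.symm) i j := by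
  rw [← e.symm.sum_comp]
  simp only [← e.symm.sum_comp (fun q => ite _ _ _), Equiv.apply_symm_apply]
  simp [partialTrace, Fintype.sum_prod_type, ite_and]

section Sites

variable {d : ℕ}

def legsEquiv (d : ℕ) : FourIdx d ≃ (Fin 2 × Fin 2 → Fin d) where
  toFun p w := comp4 w p
  invFun f := (f (0, 0), f (1, 0), f (0, 1), f (1, 1))
  left_inv p := rfl
  right_inv f := by ext w; fin_cases w <;> rfl

def siteEquiv (z : Fin 2 × Fin 2) : FourIdx d ≃ Fin d × ({w // w ≠ z} → Fin d) :=
  (legsEquiv d).trans (Equiv.piSplitAt z fun _ => Fin d)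

@[simp]
lemma siteEquiv_fst (z : Fin 2 × Fin 2) (p : FourIdx d) : (siteEquiv z p).1 = comp4 z p := rfl

lemma siteEquiv_snd_apply (z : Fin 2 × Fin 2) (p : FourIdx d) (w : {w // w ≠ z}) :
    (siteEquiv z p).2 w = comp4 w p := rfl

@[simp]
lemma siteEquiv_snd_eq_iff (z : Fin 2 × Fin 2) (p q : FourIdx d) :
    (siteEquiv z p).2 = (siteEquiv z q).2 ↔ ∀ w, w ≠ z → comp4 w p = comp4 w q := by
  simp only [funext_iff, siteEquiv_snd_apply, Subtype.forall]

lemma card_complementLegs (z : Fin 2 × Fin 2) :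
    Fintype.card ({w // w ≠ z} → Fin d) = d ^ 3 := by
  simp

lemma siteOp4_eq_submatrix_kronecker (z : Fin 2 × Fin 2) (a : Matrix (Fin d) (Fin d) ℂ) :
    siteOp4 z a = (a ⊗ₖ (1 : Matrix _ _ ℂ)).submatrix (siteEquiv z) (siteEquiv z) := by
  ext p q
  simp only [siteOp4, of_apply, submatrix_apply, kroneckerMap_apply, siteEquiv_fst, one_apply,
    siteEquiv_snd_eq_iff, mul_comm]

lemma Mmap_eq_smul_partialTrace (U : Matrix (FourIdx d) (FourIdx d) ℂ) (z : Fin 2 × Fin 2)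
    (a : Matrix (Fin d) (Fin d) ℂ) :
    Mmap U z a = (1 / (d : ℂ) ^ 3) • partialTrace ((Uᴴ * siteOp4 z a * U).submatrix
      (siteEquiv (opp z)).symm (siteEquiv (opp z)).symm) := by
  ext i j
  rw [Mmap, of_apply, Matrix.smul_apply, smul_eq_mul, ← sum_sum_ite_eq_partialTrace]
  simp only [siteEquiv_fst, siteEquiv_snd_eq_iff]

end Sites

theorem Mmap_frobenius_contraction_general (d : ℕ)
    (U : Matrix (FourIdx d) (FourIdx d) ℂ) (hU : IsUnitary U) (z : Fin 2 × Fin 2)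
    (a : Matrix (Fin d) (Fin d) ℂ) :
    frobNorm (Mmap U z a) ≤ frobNorm a := by
  refine Real.sqrt_le_sqrt (?_ : frobNormSq (Mmap U z a) ≤ frobNormSq a)
  rcases eq_or_ne d 0 with rfl | hd
  · simp [frobNormSq]
  set B := Uᴴ * siteOp4 z a * U
  have hB : frobNormSq B = (d : ℝ) ^ 3 * frobNormSq a := by
    rw [frobNormSq_conjTranspose_mul_mul _ hU.1, siteOp4_eq_submatrix_kronecker,
      frobNormSq_submatrix_equiv, frobNormSq_kronecker_one, card_complementLegs, Nat.cast_pow]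
  have hTr := frobNormSq_partialTrace_le
    (B.submatrix (siteEquiv (opp z)).symm (siteEquiv (opp z)).symm)
  rw [frobNormSq_submatrix_equiv, card_complementLegs, Nat.cast_pow, hB] at hTr
  calc frobNormSq (Mmap U z a)
      = ‖1 / (d : ℂ) ^ 3‖ ^ 2 * frobNormSq (partialTrace
          (B.submatrix (siteEquiv (opp z)).symm (siteEquiv (opp z)).symm)) := by
        rw [Mmap_eq_smul_partialTrace, frobNormSq_smul]
    _ ≤ (1 / (d : ℝ) ^ 3) ^ 2 * ((d : ℝ) ^ 3 * ((d : ℝ) ^ 3 * frobNormSq a)) := by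
        rw [norm_div, norm_one, norm_pow, Complex.norm_natCast]
        exact mul_le_mul_of_nonneg_left hTr (by positivity)
    _ = frobNormSq a := by field_simp

/-- `M_z` is a contraction in the Frobenius norm. -/
theorem Mmap_frobenius_contraction (d : ℕ) (hd : 1 ≤ d)
    (U : Matrix (FourIdx d) (FourIdx d) ℂ) (hU : IsUnitary U) (z : Fin 2 × Fin 2)
    (a : Matrix (Fin d) (Fin d) ℂ) :
    frobNorm (Mmap U z a) ≤ frobNorm a :=
  Mmap_frobenius_contraction_general d U hU z a
end

section
/- Let n ≥ 1 and A : Matrix (Fin n) (Fin n) ℂ, and suppose A is power-bounded: there exists C ∈ ℝ such that for every k ∈ ℕ every entry of A^k has absolute value at most C. Then every eigenvalue λ ∈ ℂ of A satisfies |λ| ≤ 1, and every eigenvalue λ with |λ| = 1 has coinciding algebraic and geometric multiplicity: the multiplicity of λ as a root of the characteristic polynomial of A equals the dimension of the eigenspace ker(A − λ·1). -/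
/-!
A vector on which the powers of `A` stay bounded cannot be an eigenvector for `|λ| > 1`, since its
orbit is `λ ^ k • v`. If `|λ| = 1` and `w` lies in `ker (A - λ) ^ 2` with `u = (A - λ) w`, then
`A ^ (k + 1) w = λ ^ (k + 1) • w + (k + 1) λ ^ k • u` grows linearly unless `u = 0`. Hence
`ker (A - λ) ^ 2 = ker (A - λ)`, so the generalized eigenspace of `λ` is the eigenspace, and the
dimension of the generalized eigenspace is the algebraic multiplicity.
-/

open Matrix

namespace Module.End

section Field

variable {K V : Type*} [Field K] [AddCommGroup V] [Module K V]

theorem maxGenEigenspace_eq_eigenspace_of_genEigenspace_two_le {f : End K V} {μ : K}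
    (h : f.genEigenspace μ 2 ≤ f.eigenspace μ) : f.maxGenEigenspace μ = f.eigenspace μ := by
  have hker : LinearMap.ker (f - μ • 1) = LinearMap.ker ((f - μ • 1) ^ 2) := by
    refine le_antisymm ?_ ?_
    · rw [← genEigenspace_one, ← genEigenspace_nat]
      exact (f.genEigenspace μ).monotone (by norm_num)
    · rwa [← genEigenspace_nat, ← eigenspace_def]
  refine le_antisymm ?_ ((f.genEigenspace μ).monotone le_top)
  rw [maxGenEigenspace, genEigenspace_top]
  refine iSup_le fun k ↦ ?_
  calc f.genEigenspace μ k ≤ f.genEigenspace μ ↑(1 + k) :=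
        (f.genEigenspace μ).monotone (by norm_cast; omega)
    _ = f.eigenspace μ := by
        rw [genEigenspace_nat, ← ker_pow_constant (by simpa using hker) k, pow_one, eigenspace_def]

end Field

section RCLike

variable {𝕜 V : Type*} [RCLike 𝕜] [NormedAddCommGroup V] [NormedSpace 𝕜 V] {f : End 𝕜 V} {μ : 𝕜}

theorem norm_le_one_of_hasEigenvector {v : V} (hv : f.HasEigenvector μ v)
    (hbdd : ∃ D, ∀ k, ‖(f ^ k) v‖ ≤ D) : ‖μ‖ ≤ 1 := by
  obtain ⟨D, hD⟩ := hbdd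
  by_contra! hμ
  have hv0 : 0 < ‖v‖ := norm_pos_iff.mpr hv.2
  obtain ⟨k, hk⟩ := pow_unbounded_of_one_lt (D / ‖v‖) hμ
  have := hD k
  rw [hv.pow_apply, norm_smul, norm_pow] at this
  rw [div_lt_iff₀ hv0] at hk
  linarith

theorem pow_succ_apply_of_apply_eq_smul_add {u w : V} (hu : f u = μ • u)
    (hw : f w = μ • w + u) (k : ℕ) :
    (f ^ (k + 1)) w = μ ^ (k + 1) • w + (((k + 1 : ℕ) : 𝕜) * μ ^ k) • u := by
  induction k with
  | zero => simp [hw]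
  | succ k ih =>
    rw [pow_succ', mul_apply, ih, map_add, map_smul, map_smul, hw, hu]
    match_scalars <;> ring

theorem eq_zero_of_apply_eq_smul_add (hμ : ‖μ‖ = 1) {u w : V} (hu : f u = μ • u)
    (hw : f w = μ • w + u) (hbdd : ∃ D, ∀ k, ‖(f ^ k) w‖ ≤ D) : u = 0 := by
  obtain ⟨D, hD⟩ := hbdd
  by_contra hu0
  have hlin : ∀ k : ℕ, ((k + 1 : ℕ) : ℝ) * ‖u‖ ≤ D + ‖w‖ := fun k ↦
    calc ((k + 1 : ℕ) : ℝ) * ‖u‖ = ‖(((k + 1 : ℕ) : 𝕜) * μ ^ k) • u‖ := by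
          rw [norm_smul, norm_mul, norm_pow, hμ, one_pow, mul_one, RCLike.norm_natCast]
      _ = ‖(f ^ (k + 1)) w - μ ^ (k + 1) • w‖ := by
          rw [pow_succ_apply_of_apply_eq_smul_add hu hw, add_sub_cancel_left]
      _ ≤ ‖(f ^ (k + 1)) w‖ + ‖μ ^ (k + 1) • w‖ := norm_sub_le _ _
      _ ≤ D + ‖w‖ := by
          rw [norm_smul, norm_pow, hμ, one_pow, one_mul]
          linarith [hD (k + 1)]
  obtain ⟨k, hk⟩ := exists_nat_gt ((D + ‖w‖) / ‖u‖)
  rw [div_lt_iff₀ (norm_pos_iff.mpr hu0)] at hk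
  have := hlin k
  push_cast at this
  linarith [norm_nonneg u]

theorem genEigenspace_two_le_eigenspace (hf : ∀ v, ∃ D, ∀ k, ‖(f ^ k) v‖ ≤ D) (hμ : ‖μ‖ = 1) :
    f.genEigenspace μ 2 ≤ f.eigenspace μ := by
  intro w hw
  rw [show (2 : ℕ∞) = (2 : ℕ) from rfl, genEigenspace_nat, LinearMap.mem_ker, pow_two,
    mul_apply] at hw
  rw [eigenspace_def, LinearMap.mem_ker]
  refine eq_zero_of_apply_eq_smul_add hμ (u := (f - μ • 1) w) (w := w) ?_ ?_ (hf w)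
  · simpa [sub_eq_zero] using hw
  · simp

end RCLike

end Module.End

namespace Matrix

variable {𝕜 ι : Type*} [RCLike 𝕜] [Fintype ι]

theorem norm_mulVec_le_of_forall_norm_le {M : Matrix ι ι 𝕜} {C : ℝ} (hM : ∀ i j, ‖M i j‖ ≤ C)
    (v : ι → 𝕜) : ‖M *ᵥ v‖ ≤ ∑ j, C * ‖v j‖ := by
  refine (pi_norm_le_iff_of_nonneg <| Finset.sum_nonneg fun j _ ↦
    mul_nonneg ((norm_nonneg _).trans (hM j j)) (norm_nonneg _)).2 fun i ↦ ?_
  refine (norm_sum_le _ _).trans (Finset.sum_le_sum fun j _ ↦ ?_)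
  rw [norm_mul]
  exact mul_le_mul_of_nonneg_right (hM i j) (norm_nonneg _)

theorem exists_norm_toLin'_pow_apply_le [DecidableEq ι] {A : Matrix ι ι 𝕜} {C : ℝ}
    (hC : ∀ k : ℕ, ∀ i j, ‖(A ^ k) i j‖ ≤ C) (v : ι → 𝕜) :
    ∃ D, ∀ k, ‖(A.toLin' ^ k) v‖ ≤ D :=
  ⟨∑ j, C * ‖v j‖, fun k ↦ by
    rw [← toLin'_pow, toLin'_apply]
    exact norm_mulVec_le_of_forall_norm_le (hC k) v⟩

end Matrix

open Module.End in
theorem power_bounded_eigenvalues_general (n : ℕ) (A : Matrix (Fin n) (Fin n) ℂ)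
    (C : ℝ) (hC : ∀ k : ℕ, ∀ i j : Fin n, ‖(A ^ k) i j‖ ≤ C) :
    ∀ lam : ℂ, (Matrix.charpoly A).IsRoot lam →
      ‖lam‖ ≤ 1 ∧
      (‖lam‖ = 1 →
        (Matrix.charpoly A).rootMultiplicity lam =
          Module.finrank ℂ
            (LinearMap.ker (Matrix.toLin' (A - lam • (1 : Matrix (Fin n) (Fin n) ℂ))))) := by
  intro lam hroot
  have hbdd := exists_norm_toLin'_pow_apply_le hC
  have hev : HasEigenvalue A.toLin' lam := by
    rwa [hasEigenvalue_iff_isRoot_charpoly, charpoly_toLin']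
  obtain ⟨v, hv⟩ := hev.exists_hasEigenvector
  refine ⟨norm_le_one_of_hasEigenvector hv (hbdd v), fun hlam ↦ ?_⟩
  rw [← charpoly_toLin', ← LinearMap.finrank_maxGenEigenspace_eq,
    maxGenEigenspace_eq_eigenspace_of_genEigenspace_two_le
      (genEigenspace_two_le_eigenspace hbdd hlam),
    eigenspace_def, map_sub, map_smul, toLin'_one, one_eq_id]

/-- A power-bounded complex matrix has all eigenvalues in the closed unit disk, and every
eigenvalue on the unit circle has coinciding algebraic and geometric multiplicity. -/
theorem power_bounded_eigenvalues (n : ℕ) (hn : 1 ≤ n) (A : Matrix (Fin n) (Fin n) ℂ)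
    (C : ℝ) (hC : ∀ k : ℕ, ∀ i j : Fin n, ‖(A ^ k) i j‖ ≤ C) :
    ∀ lam : ℂ, (Matrix.charpoly A).IsRoot lam →
      ‖lam‖ ≤ 1 ∧
      (‖lam‖ = 1 →
        (Matrix.charpoly A).rootMultiplicity lam =
          Module.finrank ℂ
            (LinearMap.ker (Matrix.toLin' (A - lam • (1 : Matrix (Fin n) (Fin n) ℂ))))) :=
  power_bounded_eigenvalues_general n A C hC
end

section
/- Let U be a unitary four-site gate, L even, t ≥ 1, a : Matrix (Fin d) (Fin d) ℂ and y a lattice site. Then the Heisenberg-evolved operator 𝕌^{−t} * a_y * 𝕌^t is supported on the light-cone base LC: there exists a matrix b indexed by the functions LC → Fin d such that for all global indices f, g, (𝕌^{−t} * a_y * 𝕌^t)[f,g] = b[f restricted to LC, g restricted to LC] if f and g agree on the complement of LC, and (𝕌^{−t} * a_y * 𝕌^t)[f,g] = 0 otherwise. -/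
open Matrix

/-- Lattice sites of the `L × L` torus. -/
abbrev Site (L : ℕ) := ZMod L × ZMod L

/-- Index type of global operators: one `Fin d` leg per lattice site. -/
abbrev GlobalIdx (d L : ℕ) := Site L → Fin d

/-- The global operator `U_{p(x)}`, acting as the four-site gate `U` on the legs at the
plaquette sites `x, x+(1,0), x+(0,1), x+(1,1)` (in this order) and as the identity elsewhere. -/
noncomputable def plaqOp {d L : ℕ} [NeZero L] (U : Matrix (FourIdx d) (FourIdx d) ℂ)
    (x : Site L) : Matrix (GlobalIdx d L) (GlobalIdx d L) ℂ :=
  Matrix.of fun f g =>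
    if ∀ u : Site L, u ≠ x → u ≠ x + (1, 0) → u ≠ x + (0, 1) → u ≠ x + (1, 1) → f u = g u then
      U (f x, f (x + (1, 0)), f (x + (0, 1)), f (x + (1, 1)))
        (g x, g (x + (1, 0)), g (x + (0, 1)), g (x + (1, 1)))
    else 0

/-- The even layer `𝕌_ee`: product of the mutually commuting gates `U_{p(2i,2j)}`. -/
noncomputable def Uee (d L : ℕ) [NeZero L] (U : Matrix (FourIdx d) (FourIdx d) ℂ) :
    Matrix (GlobalIdx d L) (GlobalIdx d L) ℂ :=
  (((List.range (L / 2)).flatMap fun i => (List.range (L / 2)).map fun j =>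
      plaqOp U (((2 * i : ℕ) : ZMod L), ((2 * j : ℕ) : ZMod L)))).prod

/-- The odd layer `𝕌_oo`: product of the mutually commuting gates `U_{p(2i+1,2j+1)}`. -/
noncomputable def Uoo (d L : ℕ) [NeZero L] (U : Matrix (FourIdx d) (FourIdx d) ℂ) :
    Matrix (GlobalIdx d L) (GlobalIdx d L) ℂ :=
  (((List.range (L / 2)).flatMap fun i => (List.range (L / 2)).map fun j =>
      plaqOp U (((2 * i + 1 : ℕ) : ZMod L), ((2 * j + 1 : ℕ) : ZMod L)))).prod

/-- One discrete time step `𝕌 = 𝕌_oo ⬝ 𝕌_ee`. -/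
noncomputable def Ustep (d L : ℕ) [NeZero L] (U : Matrix (FourIdx d) (FourIdx d) ℂ) :
    Matrix (GlobalIdx d L) (GlobalIdx d L) ℂ :=
  Uoo d L U * Uee d L U

/-- The global operator acting as the `d × d` matrix `a` on leg `x` and as the identity
elsewhere. -/
noncomputable def siteOpG {d L : ℕ} [NeZero L] (a : Matrix (Fin d) (Fin d) ℂ) (x : Site L) :
    Matrix (GlobalIdx d L) (GlobalIdx d L) ℂ :=
  Matrix.of fun f g =>
    (if ∀ u : Site L, u ≠ x → f u = g u then 1 else 0) * a (f x) (g x)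

/-- Circular distance in `ZMod L`. -/
def cdist {L : ℕ} [NeZero L] (a b : ZMod L) : ℕ := min (a - b).val (b - a).val

/-- Torus ℓ∞-distance of two lattice sites. -/
def torusDist {L : ℕ} [NeZero L] (u v : Site L) : ℕ :=
  max (cdist u.1 v.1) (cdist u.2 v.2)

/-- The anchor site `m` of the plaquette containing `y`: with `ŷ ∈ {0,…,L−1}²` the
representative of `y`, `m_k = ŷ_k` if `ŷ_k` is odd and `m_k = ŷ_k − 1` if `ŷ_k` is even. -/
def msite {L : ℕ} [NeZero L] (y : Site L) : Site L :=
  ((if Odd y.1.val then y.1 else y.1 - 1), (if Odd y.2.val then y.2 else y.2 - 1))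

/-- The base of the light cone of `y` for time `t`: all sites within torus ℓ∞-distance
`2t − 1` of some site of the plaquette anchored at `msite y`. -/
def LCfin {L : ℕ} [NeZero L] (y : Site L) (t : ℕ) : Finset (Site L) :=
  Finset.univ.filter fun z =>
    ∃ w ∈ ({msite y, msite y + (1, 0), msite y + (0, 1), msite y + (1, 1)} : Finset (Site L)),
      torusDist w z ≤ 2 * t - 1

open scoped Kronecker

/-!
Call an operator on the legs `ι → α` supported on `S` when it is `b ⊗ 1` for some `b` acting on
the legs in `S`. These operators form a `*`-subalgebra, and operators with disjoint supports
commute. Conjugating an operator supported on `S` by a layer of unitary gates on pairwise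
disjoint plaquettes therefore cancels every gate that misses `S`, and the result is supported on
`S` together with the plaquettes meeting it: every layer enlarges the support by at most one in
torus ℓ∞-distance. Starting from `{y}`, the first (odd) layer only adds the plaquette of
`msite y`, and the remaining `2t - 1` layers give the light-cone base.
-/

section Support

variable {ι α R : Type*} [Fintype ι] [DecidableEq ι] [DecidableEq α] [CommSemiring R]

def extendOn (S : Finset ι) (b : Matrix (S → α) (S → α) R) : Matrix (ι → α) (ι → α) R :=
  (b ⊗ₖ (1 : Matrix ({i // i ∉ S} → α) ({i // i ∉ S} → α) R)).submatrix
    (Equiv.piEquivPiSubtypeProd (· ∈ S) fun _ => α) (Equiv.piEquivPiSubtypeProd (· ∈ S) fun _ => α)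

def SupportedOn (S : Finset ι) (M : Matrix (ι → α) (ι → α) R) : Prop :=
  ∃ b, extendOn S b = M

variable {S T : Finset ι} {M N : Matrix (ι → α) (ι → α) R}

theorem extendOn_apply (b : Matrix (S → α) (S → α) R) (f g : ι → α) :
    extendOn S b f g = if ∀ i ∉ S, f i = g i then b (fun i => f i) (fun i => g i) else 0 := by
  simp only [extendOn, submatrix_apply, kroneckerMap_apply, one_apply, funext_iff,
    Subtype.forall, mul_ite, mul_one, mul_zero]
  rfl

theorem extendOn_one : extendOn S (1 : Matrix (S → α) (S → α) R) = 1 := by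
  rw [extendOn, one_kronecker_one, submatrix_one_equiv]

theorem extendOn_conjTranspose [StarRing R] (b : Matrix (S → α) (S → α) R) :
    extendOn S bᴴ = (extendOn S b)ᴴ := by
  rw [extendOn, extendOn, conjTranspose_submatrix, conjTranspose_kronecker, conjTranspose_one]

theorem SupportedOn.conjTranspose [StarRing R] (hM : SupportedOn S M) : SupportedOn S Mᴴ := by
  obtain ⟨b, rfl⟩ := hM
  exact ⟨bᴴ, extendOn_conjTranspose b⟩

theorem SupportedOn.mono (hM : SupportedOn S M) (hST : S ⊆ T) : SupportedOn T M := by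
  obtain ⟨b, rfl⟩ := hM
  refine ⟨Matrix.of fun k k' => if ∀ i : T, i.1 ∉ S → k i = k' i then
    b (fun i => k ⟨i, hST i.2⟩) (fun i => k' ⟨i, hST i.2⟩) else 0, ?_⟩
  ext f g
  rw [extendOn_apply, extendOn_apply]
  by_cases hS : ∀ i ∉ S, f i = g i
  · have hT : ∀ i ∉ T, f i = g i := fun i hi => hS i fun h => hi (hST h)
    rw [if_pos hT, if_pos hS, Matrix.of_apply, if_pos fun (i : T) hi => hS i hi]
  · rw [if_neg hS, Matrix.of_apply]
    split_ifs with hT hTS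
    · exact absurd (fun i hi => if h : i ∈ T then hTS ⟨i, h⟩ hi else hT i h) hS
    all_goals rfl

variable [Fintype α]

theorem extendOn_mul (b c : Matrix (S → α) (S → α) R) :
    extendOn S (b * c) = extendOn S b * extendOn S c := by
  rw [extendOn, extendOn, extendOn, submatrix_mul_equiv, ← mul_kronecker_mul, one_mul]

theorem SupportedOn.mul (hM : SupportedOn S M) (hN : SupportedOn S N) : SupportedOn S (M * N) := by
  obtain ⟨b, rfl⟩ := hM
  obtain ⟨c, rfl⟩ := hN
  exact ⟨b * c, extendOn_mul b c⟩

theorem extendOn_mul_extendOn_apply_of_disjoint (h : Disjoint S T) (b : Matrix (S → α) (S → α) R)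
    (c : Matrix (T → α) (T → α) R) (f g : ι → α) :
    (extendOn S b * extendOn T c) f g = if ∀ i ∉ S ∪ T, f i = g i then
      b (fun i => f i) (fun i => g i) * c (fun i => f i) (fun i => g i) else 0 := by
  -- only the intermediate index `k₀`, equal to `g` on `S` and to `f` elsewhere, contributes
  set k₀ := S.piecewise g f with hk₀
  have hk₀S : (fun i : S => k₀ i) = fun i : S => g i :=
    funext fun i => S.piecewise_eq_of_mem _ _ i.2
  have hk₀T : (fun i : T => k₀ i) = fun i : T => f i :=
    funext fun i => S.piecewise_eq_of_notMem _ _ (Finset.disjoint_right.1 h i.2)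
  have hagree : (∀ i ∉ T, k₀ i = g i) ↔ ∀ i ∉ S ∪ T, f i = g i := by
    simp only [k₀, Finset.mem_union, not_or, Finset.piecewise, and_imp]
    refine ⟨fun H i hS hT => by simpa [hS] using H i hT, fun H i hT => ?_⟩
    by_cases hS : i ∈ S <;> simp [hS, H i _ hT]
  rw [mul_apply, Finset.sum_eq_single k₀]
  · rw [extendOn_apply, extendOn_apply, if_pos fun i hi => (S.piecewise_eq_of_notMem _ _ hi).symm,
      hk₀S, hk₀T]
    by_cases hfg : ∀ i ∉ S ∪ T, f i = g i
    · rw [if_pos (hagree.2 hfg), if_pos hfg]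
    · rw [if_neg (mt hagree.1 hfg), if_neg hfg, mul_zero]
  · intro k _ hk
    rw [extendOn_apply, extendOn_apply]
    split_ifs with hS hT
    · refine absurd (funext fun i => ?_) hk
      by_cases hi : i ∈ S
      · rw [hT i (Finset.disjoint_left.1 h hi), hk₀, S.piecewise_eq_of_mem _ _ hi]
      · rw [← hS i hi, hk₀, S.piecewise_eq_of_notMem _ _ hi]
    all_goals simp
  · simp

theorem SupportedOn.commute (hM : SupportedOn S M) (hN : SupportedOn T N) (h : Disjoint S T) :
    Commute M N := by
  obtain ⟨b, rfl⟩ := hM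
  obtain ⟨c, rfl⟩ := hN
  ext f g
  rw [extendOn_mul_extendOn_apply_of_disjoint h, extendOn_mul_extendOn_apply_of_disjoint h.symm,
    Finset.union_comm, mul_comm]

theorem SupportedOn.conj [StarRing R] {G : Matrix (ι → α) (ι → α) R} (hM : SupportedOn S M)
    (hG : SupportedOn T G) : SupportedOn (S ∪ T) (Gᴴ * M * G) :=
  have hG' := hG.mono Finset.subset_union_right
  (hG'.conjTranspose.mul (hM.mono Finset.subset_union_left)).mul hG'

end Support

theorem IsUnitary.submatrix_equiv {m n : Type*} [Fintype m] [DecidableEq m] [Fintype n]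
    [DecidableEq n] {U : Matrix n n ℂ} (hU : IsUnitary U) (e : m ≃ n) :
    IsUnitary (U.submatrix e e) :=
  ⟨by rw [conjTranspose_submatrix, submatrix_mul_equiv, hU.1, submatrix_one_equiv],
    by rw [conjTranspose_submatrix, submatrix_mul_equiv, hU.2, submatrix_one_equiv]⟩

section Conjugation

variable {ι α : Type*} [Fintype ι] [DecidableEq ι] [Fintype α] [DecidableEq α]
  {S T : Finset ι} {M G : Matrix (ι → α) (ι → α) ℂ}

theorem IsUnitary.extendOn {b : Matrix (S → α) (S → α) ℂ} (hb : IsUnitary b) :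
    IsUnitary (extendOn S b) :=
  ⟨by rw [← extendOn_conjTranspose, ← extendOn_mul, hb.1, extendOn_one],
    by rw [← extendOn_conjTranspose, ← extendOn_mul, hb.2, extendOn_one]⟩

theorem conj_eq_self_of_disjoint (hM : SupportedOn S M) (hG : SupportedOn T G)
    (hGu : IsUnitary G) (h : Disjoint S T) : Gᴴ * M * G = M := by
  rw [mul_assoc, (hM.commute hG h).eq, ← mul_assoc, hGu.2, one_mul]

theorem SupportedOn.conj_listProd {κ : Type*} {gate : κ → Matrix (ι → α) (ι → α) ℂ}
    {T : κ → Finset ι} (hgate : ∀ x, SupportedOn (T x) (gate x)) (hU : ∀ x, IsUnitary (gate x))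
    {xs : List κ} (hxs : xs.Pairwise fun x x' => Disjoint (T x) (T x')) {S S' : Finset ι}
    (hM : SupportedOn S M) (hSS' : S ⊆ S') (hmeet : ∀ x ∈ xs, ¬Disjoint (T x) S → T x ⊆ S') :
    SupportedOn S' ((xs.map gate).prodᴴ * M * (xs.map gate).prod) := by
  induction xs generalizing S M with
  | nil => simpa using hM.mono hSS'
  | cons x xs ih =>
    rw [List.pairwise_cons] at hxs
    have hmeet' : ∀ x' ∈ xs, ¬Disjoint (T x') S → T x' ⊆ S' :=
      fun x' hx' => hmeet x' (List.mem_cons_of_mem _ hx')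
    have hreassoc : (gate x * (xs.map gate).prod)ᴴ * M * (gate x * (xs.map gate).prod) =
        (xs.map gate).prodᴴ * ((gate x)ᴴ * M * gate x) * (xs.map gate).prod := by
      simp only [conjTranspose_mul, mul_assoc]
    rw [List.map_cons, List.prod_cons, hreassoc]
    by_cases hx : Disjoint (T x) S
    · rw [conj_eq_self_of_disjoint hM (hgate x) (hU x) hx.symm]
      exact ih hxs.2 hM hSS' hmeet'
    · refine ih hxs.2 (hM.conj (hgate x)) (Finset.union_subset hSS' (hmeet x (by simp) hx))
        fun x' hx' hx'S => hmeet' x' hx' fun hdisj => hx'S ?_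
      exact Finset.disjoint_union_right.2 ⟨hdisj, (hxs.1 x' hx').symm⟩

end Conjugation

section Plaquette

variable {d L : ℕ}

def plaquette (x : Site L) : Finset (Site L) := {x, x + (1, 0), x + (0, 1), x + (1, 1)}

def plaquetteLegs (x : Site L) (k : plaquette x → Fin d) : FourIdx d :=
  (k ⟨x, by simp [plaquette]⟩, k ⟨x + (1, 0), by simp [plaquette]⟩,
    k ⟨x + (0, 1), by simp [plaquette]⟩, k ⟨x + (1, 1), by simp [plaquette]⟩)

theorem coords_of_mem_plaquette {x z : Site L} (h : z ∈ plaquette x) :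
    (z.1 = x.1 ∨ z.1 = x.1 + 1) ∧ (z.2 = x.2 ∨ z.2 = x.2 + 1) := by
  simp only [plaquette, Finset.mem_insert, Finset.mem_singleton] at h
  rcases h with rfl | rfl | rfl | rfl <;> simp

theorem card_plaquette (hL2 : 2 ≤ L) (x : Site L) : (plaquette x).card = 4 := by
  have : Fact (1 < L) := ⟨hL2⟩
  simp [plaquette, Prod.ext_iff]

theorem plaquetteLegs_bijective (hL2 : 2 ≤ L) (x : Site L) :
    Function.Bijective (plaquetteLegs (d := d) x) := by
  refine (Fintype.bijective_iff_injective_and_card _).2 ⟨fun k k' h => ?_, ?_⟩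
  · simp only [plaquetteLegs, Prod.mk.injEq] at h
    funext ⟨z, hz⟩
    simp only [plaquette, Finset.mem_insert, Finset.mem_singleton] at hz
    rcases hz with rfl | rfl | rfl | rfl <;> tauto
  · simp [card_plaquette hL2, pow_succ, mul_assoc]

end Plaquette

section Gates

variable {d L : ℕ} [NeZero L]

theorem plaqOp_eq_extendOn (U : Matrix (FourIdx d) (FourIdx d) ℂ) (x : Site L) :
    plaqOp U x = extendOn (plaquette x) (U.submatrix (plaquetteLegs x) (plaquetteLegs x)) := by
  ext f g
  rw [extendOn_apply, submatrix_apply]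
  simp [plaqOp, plaquette]
  rfl

theorem supportedOn_plaqOp (U : Matrix (FourIdx d) (FourIdx d) ℂ) (x : Site L) :
    SupportedOn (plaquette x) (plaqOp U x) :=
  ⟨_, (plaqOp_eq_extendOn U x).symm⟩

theorem isUnitary_plaqOp (hL2 : 2 ≤ L) {U : Matrix (FourIdx d) (FourIdx d) ℂ} (hU : IsUnitary U)
    (x : Site L) : IsUnitary (plaqOp U x) := by
  rw [plaqOp_eq_extendOn]
  exact (hU.submatrix_equiv (Equiv.ofBijective _ (plaquetteLegs_bijective hL2 x))).extendOn

theorem supportedOn_siteOpG (a : Matrix (Fin d) (Fin d) ℂ) (y : Site L) :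
    SupportedOn {y} (siteOpG a y) := by
  refine ⟨a.submatrix (fun k => k ⟨y, Finset.mem_singleton_self y⟩)
    (fun k => k ⟨y, Finset.mem_singleton_self y⟩), ?_⟩
  ext f g
  simp [extendOn_apply, siteOpG]

end Gates

section Geometry

variable {L : ℕ} [NeZero L]

theorem cdist_eq_natAbs_valMinAbs (a b : ZMod L) : cdist a b = (a - b).valMinAbs.natAbs := by
  rw [ZMod.valMinAbs_natAbs_eq_min, cdist, ← neg_sub a b, ZMod.neg_val]
  split_ifs with h <;> simp [h]

theorem cdist_triangle (a b c : ZMod L) : cdist a c ≤ cdist a b + cdist b c := by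
  simp only [cdist_eq_natAbs_valMinAbs]
  calc (a - c).valMinAbs.natAbs = ((a - b) + (b - c)).valMinAbs.natAbs := by rw [sub_add_sub_cancel]
    _ ≤ ((a - b).valMinAbs + (b - c).valMinAbs).natAbs := ZMod.natAbs_valMinAbs_add_le _ _
    _ ≤ _ := Int.natAbs_add_le _ _

theorem torusDist_triangle (u v w : Site L) : torusDist u w ≤ torusDist u v + torusDist v w := by
  have h1 := cdist_triangle u.1 v.1 w.1
  have h2 := cdist_triangle u.2 v.2 w.2
  simp only [torusDist]
  omega

theorem torusDist_self (u : Site L) : torusDist u u = 0 := by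
  simp [torusDist, cdist]

theorem cdist_le_one {a b c : ZMod L} (hb : b = a ∨ b = a + 1) (hc : c = a ∨ c = a + 1) :
    cdist b c ≤ 1 := by
  have hstep : (a + 1 - a).val ≤ 1 := by
    rw [add_sub_cancel_left, ZMod.val_one_eq_one_mod]
    exact Nat.mod_le 1 L
  rcases hb with rfl | rfl <;> rcases hc with rfl | rfl
  · simp [cdist]
  · exact (min_le_right _ _).trans hstep
  · exact (min_le_left _ _).trans hstep
  · simp [cdist]

theorem torusDist_le_one_of_mem_plaquette {x z z' : Site L} (hz : z ∈ plaquette x)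
    (hz' : z' ∈ plaquette x) : torusDist z z' ≤ 1 :=
  max_le (cdist_le_one (coords_of_mem_plaquette hz).1 (coords_of_mem_plaquette hz').1)
    (cdist_le_one (coords_of_mem_plaquette hz).2 (coords_of_mem_plaquette hz').2)

def thickening (P : Finset (Site L)) (r : ℕ) : Finset (Site L) :=
  Finset.univ.filter fun z => ∃ w ∈ P, torusDist w z ≤ r

theorem LCfin_eq_thickening (y : Site L) (t : ℕ) :
    LCfin y t = thickening (plaquette (msite y)) (2 * t - 1) := rfl

theorem subset_thickening (P : Finset (Site L)) (r : ℕ) : P ⊆ thickening P r :=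
  fun z hz => Finset.mem_filter.2 ⟨Finset.mem_univ z, z, hz, by simp [torusDist_self]⟩

theorem thickening_mono (P : Finset (Site L)) {r r' : ℕ} (h : r ≤ r') :
    thickening P r ⊆ thickening P r' :=
  Finset.monotone_filter_right _ fun _ _ ⟨w, hw, hd⟩ => ⟨w, hw, hd.trans h⟩

theorem plaquette_subset_thickening_succ {P : Finset (Site L)} {r : ℕ} {x : Site L}
    (h : ¬Disjoint (plaquette x) (thickening P r)) : plaquette x ⊆ thickening P (r + 1) := by
  obtain ⟨z, hzx, hzP⟩ := Finset.not_disjoint_iff.1 h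
  obtain ⟨w, hw, hwz⟩ := (Finset.mem_filter.1 hzP).2
  intro z' hz'
  refine Finset.mem_filter.2 ⟨Finset.mem_univ z', w, hw, ?_⟩
  have := torusDist_triangle w z z'
  have := torusDist_le_one_of_mem_plaquette hzx hz'
  omega

theorem mem_plaquette_msite (y : Site L) : y ∈ plaquette (msite y) := by
  obtain ⟨y1, y2⟩ := y
  by_cases h1 : Odd y1.val <;> by_cases h2 : Odd y2.val <;> simp [plaquette, msite, h1, h2]

end Geometry

theorem odd_val_natCast_iff {L : ℕ} (hL : Even L) (n : ℕ) : Odd ((n : ZMod L)).val ↔ Odd n := by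
  rw [ZMod.val_natCast, Nat.odd_iff, Nat.odd_iff, Nat.mod_mod_of_dvd _ (even_iff_two_dvd.1 hL)]

theorem ite_odd_val_eq_of_adjacent {L : ℕ} (hL : Even L) {n : ℕ} {a : ZMod L}
    (ha : a = ((2 * n + 1 : ℕ) : ZMod L) ∨ a = ((2 * n + 1 : ℕ) : ZMod L) + 1) :
    (if Odd a.val then a else a - 1) = ((2 * n + 1 : ℕ) : ZMod L) := by
  rcases ha with rfl | rfl
  · rw [if_pos ((odd_val_natCast_iff hL _).2 (odd_two_mul_add_one n))]
  · rw [if_neg, add_sub_cancel_right]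
    rw [show ((2 * n + 1 : ℕ) : ZMod L) + 1 = ((2 * (n + 1) : ℕ) : ZMod L) by push_cast; ring,
      odd_val_natCast_iff hL, Nat.not_odd_iff_even]
    exact even_two_mul _

section Layers

variable {L : ℕ} [NeZero L]

def anchor (c i j : ℕ) : Site L := (((2 * i + c : ℕ) : ZMod L), ((2 * j + c : ℕ) : ZMod L))

def layerAnchors (L c : ℕ) : List (Site L) :=
  (List.range (L / 2)).flatMap fun i => (List.range (L / 2)).map (anchor c i)

theorem val_sub_div_two_eq (hL : Even L) {c i : ℕ} (hi : i < L / 2) {a : ZMod L}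
    (ha : a = ((2 * i + c : ℕ) : ZMod L) ∨ a = ((2 * i + c : ℕ) : ZMod L) + 1) :
    (a - c).val / 2 = i := by
  obtain ⟨ε, hε, rfl⟩ : ∃ ε ≤ 1, a = ((2 * i + ε : ℕ) : ZMod L) + c := by
    rcases ha with rfl | rfl
    exacts [⟨0, zero_le_one, by push_cast; ring⟩, ⟨1, le_rfl, by push_cast; ring⟩]
  obtain ⟨m, rfl⟩ := hL
  rw [add_sub_cancel_right, ZMod.val_natCast_of_lt (by omega)]
  omega

theorem disjoint_plaquette_anchor (hL : Even L) (c : ℕ) {i j i' j' : ℕ} (hi : i < L / 2)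
    (hj : j < L / 2) (hi' : i' < L / 2) (hj' : j' < L / 2) (hne : (i, j) ≠ (i', j')) :
    Disjoint (plaquette (anchor c i j : Site L)) (plaquette (anchor c i' j')) := by
  refine Finset.disjoint_left.2 fun z hz hz' => hne ?_
  obtain ⟨h1, h2⟩ := coords_of_mem_plaquette hz
  obtain ⟨h1', h2'⟩ := coords_of_mem_plaquette hz'
  rw [← val_sub_div_two_eq hL hi h1, ← val_sub_div_two_eq hL hj h2,
    ← val_sub_div_two_eq hL hi' h1', ← val_sub_div_two_eq hL hj' h2']

theorem layerAnchors_pairwise_disjoint (hL : Even L) (c : ℕ) :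
    (layerAnchors L c).Pairwise fun x x' => Disjoint (plaquette x) (plaquette x') := by
  refine List.pairwise_flatMap.2 ⟨fun i hi => ?_, List.pairwise_lt_range.imp_of_mem ?_⟩
  · refine List.pairwise_map.2 (List.pairwise_lt_range.imp_of_mem fun hj hj' hlt => ?_)
    rw [List.mem_range] at hi hj hj'
    exact disjoint_plaquette_anchor hL c hi hj hi hj' (by simp [hlt.ne])
  · intro i i' hi hi' hlt x hx x' hx'
    obtain ⟨j, hj, rfl⟩ := List.mem_map.1 hx
    obtain ⟨j', hj', rfl⟩ := List.mem_map.1 hx'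
    rw [List.mem_range] at hi hi' hj hj'
    exact disjoint_plaquette_anchor hL c hi hj hi' hj' (by simp [hlt.ne])

theorem anchor_one_eq_msite (hL : Even L) {i j : ℕ} {y : Site L}
    (hy : y ∈ plaquette (anchor 1 i j)) : anchor 1 i j = msite y := by
  obtain ⟨h1, h2⟩ := coords_of_mem_plaquette hy
  exact Prod.ext (ite_odd_val_eq_of_adjacent hL h1).symm (ite_odd_val_eq_of_adjacent hL h2).symm

end Layers

section Evolution

variable {d L : ℕ} [NeZero L] {U : Matrix (FourIdx d) (FourIdx d) ℂ}

theorem Uoo_eq_prod_layerAnchors : Uoo d L U = ((layerAnchors L 1).map (plaqOp U)).prod := by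
  simp [Uoo, layerAnchors, anchor, List.map_flatMap, Function.comp_def]

theorem Uee_eq_prod_layerAnchors : Uee d L U = ((layerAnchors L 0).map (plaqOp U)).prod := by
  simp [Uee, layerAnchors, anchor, List.map_flatMap, Function.comp_def]

theorem Ustep_conj_eq (M : Matrix (GlobalIdx d L) (GlobalIdx d L) ℂ) :
    (Ustep d L U)ᴴ * M * Ustep d L U =
      (Uee d L U)ᴴ * ((Uoo d L U)ᴴ * M * Uoo d L U) * Uee d L U := by
  simp only [Ustep, conjTranspose_mul, mul_assoc]

theorem SupportedOn.conj_layer_thickening (hL : Even L) (hL2 : 2 ≤ L) (hU : IsUnitary U)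
    {P : Finset (Site L)} {r : ℕ} {M : Matrix (GlobalIdx d L) (GlobalIdx d L) ℂ}
    (hM : SupportedOn (thickening P r) M) (c : ℕ) :
    SupportedOn (thickening P (r + 1))
      (((layerAnchors L c).map (plaqOp U)).prodᴴ * M * ((layerAnchors L c).map (plaqOp U)).prod) :=
  hM.conj_listProd (supportedOn_plaqOp U) (isUnitary_plaqOp hL2 hU)
    (layerAnchors_pairwise_disjoint hL c) (thickening_mono P r.le_succ)
    fun _ _ hx => plaquette_subset_thickening_succ hx

theorem SupportedOn.conj_Ustep_thickening (hL : Even L) (hL2 : 2 ≤ L) (hU : IsUnitary U)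
    {P : Finset (Site L)} {r : ℕ} {M : Matrix (GlobalIdx d L) (GlobalIdx d L) ℂ}
    (hM : SupportedOn (thickening P r) M) :
    SupportedOn (thickening P (r + 2)) ((Ustep d L U)ᴴ * M * Ustep d L U) := by
  rw [Ustep_conj_eq, Uoo_eq_prod_layerAnchors, Uee_eq_prod_layerAnchors]
  exact (hM.conj_layer_thickening hL hL2 hU 1).conj_layer_thickening hL hL2 hU 0

theorem supportedOn_conj_Ustep_siteOpG (hL : Even L) (hL2 : 2 ≤ L) (hU : IsUnitary U)
    (a : Matrix (Fin d) (Fin d) ℂ) (y : Site L) :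
    SupportedOn (thickening (plaquette (msite y)) 1)
      ((Ustep d L U)ᴴ * siteOpG a y * Ustep d L U) := by
  rw [Ustep_conj_eq, Uoo_eq_prod_layerAnchors, Uee_eq_prod_layerAnchors]
  refine SupportedOn.conj_layer_thickening hL hL2 hU ?_ 0
  -- the odd layer does not enlarge the support: its only gate touching `y` sits at `msite y`
  refine (supportedOn_siteOpG a y).conj_listProd (supportedOn_plaqOp U) (isUnitary_plaqOp hL2 hU)
    (layerAnchors_pairwise_disjoint hL 1)
    (Finset.singleton_subset_iff.2 (subset_thickening _ 0 (mem_plaquette_msite y)))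
    fun x hx hxy => ?_
  obtain ⟨i, -, j, -, rfl⟩ : ∃ i < L / 2, ∃ j < L / 2, anchor 1 i j = x := by
    simpa [layerAnchors] using hx
  rw [anchor_one_eq_msite hL (by simpa using hxy)]
  exact subset_thickening _ 0

theorem supportedOn_heisenberg (hL : Even L) (hL2 : 2 ≤ L) (hU : IsUnitary U)
    (a : Matrix (Fin d) (Fin d) ℂ) (y : Site L) (k : ℕ) :
    SupportedOn (thickening (plaquette (msite y)) (2 * k + 1))
      ((Ustep d L U)ᴴ ^ (k + 1) * siteOpG a y * Ustep d L U ^ (k + 1)) := by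
  induction k with
  | zero => simpa using supportedOn_conj_Ustep_siteOpG hL hL2 hU a y
  | succ k ih =>
    rw [pow_succ' _ (k + 1), pow_succ _ (k + 1), show 2 * (k + 1) + 1 = 2 * k + 1 + 2 by ring]
    simpa only [mul_assoc] using ih.conj_Ustep_thickening hL hL2 hU

end Evolution

theorem heisenberg_lightcone_support_general (d L t : ℕ) [NeZero L]
    (hL : Even L) (hL2 : 2 ≤ L) (ht : 1 ≤ t)
    (U : Matrix (FourIdx d) (FourIdx d) ℂ) (hU : IsUnitary U)
    (a : Matrix (Fin d) (Fin d) ℂ) (y : Site L) :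
    ∃ b : Matrix ({z // z ∈ LCfin y t} → Fin d) ({z // z ∈ LCfin y t} → Fin d) ℂ,
      ∀ f g : GlobalIdx d L,
        ((Ustep d L U)ᴴ ^ t * siteOpG a y * (Ustep d L U) ^ t) f g =
          if ∀ z : Site L, z ∉ LCfin y t → f z = g z
          then b (fun w => f w.1) (fun w => g w.1) else 0 := by
  obtain ⟨k, rfl⟩ := Nat.exists_eq_add_of_le' ht
  rw [LCfin_eq_thickening, show 2 * (k + 1) - 1 = 2 * k + 1 by omega]
  obtain ⟨b, hb⟩ := supportedOn_heisenberg hL hL2 hU a y k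
  exact ⟨b, fun f g => by rw [← hb, extendOn_apply]⟩

/-- The Heisenberg-evolved local operator `𝕌^{−t} a_y 𝕌^t` is supported on the
light-cone base `LC`. -/
theorem heisenberg_lightcone_support (d L t : ℕ) [NeZero L]
    (hd : 1 ≤ d) (hL : Even L) (hL2 : 2 ≤ L) (ht : 1 ≤ t)
    (U : Matrix (FourIdx d) (FourIdx d) ℂ) (hU : IsUnitary U)
    (a : Matrix (Fin d) (Fin d) ℂ) (y : Site L) :
    ∃ b : Matrix ({z // z ∈ LCfin y t} → Fin d) ({z // z ∈ LCfin y t} → Fin d) ℂ,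
      ∀ f g : GlobalIdx d L,
        ((Ustep d L U)ᴴ ^ t * siteOpG a y * (Ustep d L U) ^ t) f g =
          if ∀ z : Site L, z ∉ LCfin y t → f z = g z
          then b (fun w => f w.1) (fun w => g w.1) else 0 :=
  heisenberg_lightcone_support_general d L t hL hL2 ht U hU a y
end

section
/- Let d ≥ 1 and Φ be a ℂ-linear endomorphism of Matrix (Fin d) (Fin d) ℂ with Φ(1) = 1 and Tr(Φ(a)) = Tr(a) for all a. Then the subspace of traceless matrices is Φ-invariant, and for all traceless a, b : Matrix (Fin d) (Fin d) ℂ there exist finitely many pairs (λ_χ, c_χ), where each λ_χ is a nonzero eigenvalue of the restriction of Φ to the traceless matrices and each c_χ is a polynomial over ℂ, such that for every natural number n ≥ d², Tr(Φ^n(b) * a) = ∑_χ c_χ(n) · λ_χ^n. -/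
open Matrix Finset

private lemma aux_expansion {V : Type*} [AddCommGroup V] [Module ℂ V] [FiniteDimensional ℂ V]
    (T : Module.End ℂ V) (f : V →ₗ[ℂ] ℂ) (v : V) (r : ℕ) (hr : Module.finrank ℂ V ≤ r) :
    ∃ (m : ℕ) (lam : Fin m → ℂ) (c : Fin m → Polynomial ℂ),
      (∀ χ : Fin m, lam χ ≠ 0 ∧ T.HasEigenvalue (lam χ)) ∧
      ∀ n : ℕ, r ≤ n → f ((T ^ n) v) = ∑ χ, (c χ).eval (n : ℂ) * lam χ ^ n := by
  classical
  have hv : v ∈ ⨆ μ, T.maxGenEigenspace μ := by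
    rw [Module.End.iSup_maxGenEigenspace_eq_top]; trivial
  rw [Submodule.mem_iSup_iff_exists_finsupp] at hv
  obtain ⟨w, hw, hsum⟩ := hv
  have hnil : ∀ μ, ((T - μ • (1 : Module.End ℂ V)) ^ r) (w μ) = 0 := by
    intro μ
    have h1 : w μ ∈ T.genEigenspace μ (Module.finrank ℂ V) := by
      rw [← Module.End.maxGenEigenspace_eq_genEigenspace_finrank]; exact hw μ
    rw [Module.End.mem_genEigenspace_nat, LinearMap.mem_ker] at h1
    have h2 : ((T - μ • (1 : Module.End ℂ V)) ^ r) =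
        ((T - μ • (1 : Module.End ℂ V)) ^ (r - Module.finrank ℂ V)) * ((T - μ • (1 : Module.End ℂ V)) ^ (Module.finrank ℂ V)) := by
      rw [← pow_add, Nat.sub_add_cancel hr]
    rw [h2, Module.End.mul_apply, h1, map_zero]
  have key : ∀ μ, ∀ n : ℕ, r ≤ n →
      f ((T ^ n) (w μ)) =
        ∑ k ∈ range r, (n.choose k : ℂ) * μ ^ (n - k) * f (((T - μ • (1 : Module.End ℂ V)) ^ k) (w μ)) := by
    intro μ n hn
    have hcomm : Commute (T - μ • (1 : Module.End ℂ V)) (μ • (1 : Module.End ℂ V)) :=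
      ((Commute.one_right (T - μ • (1 : Module.End ℂ V))).smul_right μ)
    have hT : T ^ n = ((T - μ • (1 : Module.End ℂ V)) + μ • (1 : Module.End ℂ V)) ^ n := by rw [sub_add_cancel]
    rw [hT, hcomm.add_pow]
    rw [LinearMap.sum_apply, map_sum]
    rw [← Finset.sum_subset (Finset.range_subset_range.mpr (by omega) : range r ⊆ range (n+1))]
    · apply Finset.sum_congr rfl
      intro k hk
      have : ((T - μ • (1 : Module.End ℂ V)) ^ k * (μ • (1 : Module.End ℂ V)) ^ (n - k) * (n.choose k : Module.End ℂ V))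
          (w μ) = (n.choose k : ℂ) • μ ^ (n - k) • (((T - μ • (1 : Module.End ℂ V)) ^ k) (w μ)) := by
        simp [Module.End.mul_apply, smul_pow, Module.End.natCast_apply, _root_.map_smul,
          Nat.cast_smul_eq_nsmul, map_nsmul, smul_comm (μ ^ (n - k))]
      rw [this]
      simp [mul_comm, mul_assoc, mul_left_comm]
    · intro k hk hk'
      simp only [Finset.mem_range, not_lt] at hk'
      have : ((T - μ • (1 : Module.End ℂ V)) ^ k) (w μ) = 0 := by
        have h2 : ((T - μ • (1 : Module.End ℂ V)) ^ k) = ((T - μ • (1 : Module.End ℂ V)) ^ (k - r)) * ((T - μ • (1 : Module.End ℂ V)) ^ r) := by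
          rw [← pow_add, Nat.sub_add_cancel hk']
        rw [h2, Module.End.mul_apply, hnil, map_zero]
      simp [Module.End.mul_apply, smul_pow, Module.End.natCast_apply, this]
  have hfv : ∀ n : ℕ, f ((T ^ n) v) = ∑ μ ∈ w.support, f ((T ^ n) (w μ)) := by
    intro n
    rw [← hsum, Finsupp.sum, map_sum, map_sum]
  set s := w.support.filter (fun μ => μ ≠ 0) with hs
  have hzero : ∀ μ ∈ w.support, μ ∉ s → ∀ n : ℕ, r ≤ n → f ((T ^ n) (w μ)) = 0 := by
    intro μ hμ hμs n hn
    have hμ0 : μ = 0 := by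
      by_contra h; exact hμs (Finset.mem_filter.mpr ⟨hμ, h⟩)
    rw [key μ n hn]
    apply Finset.sum_eq_zero
    intro k hk
    have hnk : n - k ≠ 0 := by
      simp only [Finset.mem_range] at hk; omega
    rw [hμ0, zero_pow hnk]
    ring
  set P : ℂ → Polynomial ℂ := fun μ => ∑ k ∈ range r,
    Polynomial.C (f (((T - μ • (1 : Module.End ℂ V)) ^ k) (w μ)) * (μ ^ k)⁻¹ / (Nat.factorial k : ℂ)) *
      descPochhammer ℂ k with hP
  have hPval : ∀ μ ∈ s, ∀ n : ℕ, r ≤ n → f ((T ^ n) (w μ)) = (P μ).eval (n : ℂ) * μ ^ n := by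
    intro μ hμ n hn
    have hμ0 : μ ≠ 0 := (Finset.mem_filter.mp hμ).2
    rw [key μ n hn, hP]
    simp only [Polynomial.eval_finset_sum, Polynomial.eval_mul, Polynomial.eval_C,
      Finset.sum_mul]
    apply Finset.sum_congr rfl
    intro k hk
    have hkn : k ≤ n := by simp only [Finset.mem_range] at hk; omega
    rw [descPochhammer_eval_eq_descFactorial ℂ n k, Nat.descFactorial_eq_factorial_mul_choose,
      pow_sub₀ μ hμ0 hkn]
    have hfac : (Nat.factorial k : ℂ) ≠ 0 := Nat.cast_ne_zero.mpr k.factorial_ne_zero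
    have hpk : (μ ^ k : ℂ) ≠ 0 := pow_ne_zero _ hμ0
    push_cast
    field_simp
  refine ⟨s.card, fun χ => (s.equivFin.symm χ : ℂ), fun χ => P (s.equivFin.symm χ : ℂ), ?_, ?_⟩
  · intro χ
    set μ : ℂ := (s.equivFin.symm χ : ℂ) with hμdef
    have hμs : μ ∈ s := (s.equivFin.symm χ).2
    have hμ0 : μ ≠ 0 := (Finset.mem_filter.mp hμs).2
    refine ⟨hμ0, Module.End.hasEigenvalue_of_hasGenEigenvalue
      (k := Module.finrank ℂ V) ?_⟩
    have hwμ : w μ ≠ 0 := Finsupp.mem_support_iff.mp (Finset.mem_filter.mp hμs).1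
    have h1 : w μ ∈ T.genEigenspace μ (Module.finrank ℂ V) := by
      rw [← Module.End.maxGenEigenspace_eq_genEigenspace_finrank]; exact hw μ
    exact Submodule.ne_bot_iff _ |>.mpr ⟨w μ, h1, hwμ⟩
  · intro n hn
    rw [hfv n, ← Finset.sum_subset (Finset.filter_subset (fun μ => μ ≠ 0) w.support)
      (fun μ hμ hμs => hzero μ hμ hμs n hn)]
    calc ∑ μ ∈ s, f ((T ^ n) (w μ))
        = ∑ μ ∈ s, (P μ).eval (n : ℂ) * μ ^ n :=
          Finset.sum_congr rfl (fun μ hμ => hPval μ hμ n hn)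
      _ = ∑ x : s, (P (x : ℂ)).eval (n : ℂ) * (x : ℂ) ^ n :=
          (Finset.sum_coe_sort s (fun μ => (P μ).eval (n : ℂ) * μ ^ n)).symm
      _ = ∑ χ : Fin s.card,
            (P (s.equivFin.symm χ : ℂ)).eval (n : ℂ) * (s.equivFin.symm χ : ℂ) ^ n :=
          (Equiv.sum_comp s.equivFin.symm
            (fun x : s => (P (x : ℂ)).eval (n : ℂ) * (x : ℂ) ^ n)).symm

/-- For a unital trace-preserving linear map `Φ` on `d × d` complex matrices, the traceless
matrices form a `Φ`-invariant subspace, and the correlations `Tr[Φⁿ(b) a]` of traceless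
`a, b` admit, for `n ≥ d²`, an expansion `∑_χ c_χ(n) λ_χ^n` over nonzero eigenvalues `λ_χ`
of the restriction of `Φ` to the traceless matrices, with polynomial coefficients `c_χ`. -/
theorem correlation_eigenvalue_expansion (d : ℕ) (hd : 1 ≤ d)
    (Φ : Matrix (Fin d) (Fin d) ℂ →ₗ[ℂ] Matrix (Fin d) (Fin d) ℂ)
    (hunital : Φ 1 = 1)
    (htrace : ∀ a : Matrix (Fin d) (Fin d) ℂ, (Φ a).trace = a.trace) :
    ∃ hinv : ∀ a ∈ LinearMap.ker (Matrix.traceLinearMap (Fin d) ℂ ℂ),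
        Φ a ∈ LinearMap.ker (Matrix.traceLinearMap (Fin d) ℂ ℂ),
      ∀ a b : Matrix (Fin d) (Fin d) ℂ, a.trace = 0 → b.trace = 0 →
        ∃ (m : ℕ) (lam : Fin m → ℂ) (c : Fin m → Polynomial ℂ),
          (∀ χ : Fin m, lam χ ≠ 0 ∧
            Module.End.HasEigenvalue (LinearMap.restrict Φ hinv) (lam χ)) ∧
          ∀ n : ℕ, d ^ 2 ≤ n →
            ((Φ ^ n) b * a).trace = ∑ χ : Fin m, (c χ).eval (n : ℂ) * lam χ ^ n := by
  have hinv : ∀ a ∈ LinearMap.ker (Matrix.traceLinearMap (Fin d) ℂ ℂ),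
      Φ a ∈ LinearMap.ker (Matrix.traceLinearMap (Fin d) ℂ ℂ) := by
    intro a ha
    simp only [LinearMap.mem_ker, Matrix.traceLinearMap_apply] at ha ⊢
    rw [htrace]; exact ha
  refine ⟨hinv, ?_⟩
  intro a b ha hb
  set V := LinearMap.ker (Matrix.traceLinearMap (Fin d) ℂ ℂ) with hV
  have hbV : b ∈ V := by
    simp only [hV, LinearMap.mem_ker, Matrix.traceLinearMap_apply]; exact hb
  let f : V →ₗ[ℂ] ℂ :=
    { toFun := fun x => ((x : Matrix (Fin d) (Fin d) ℂ) * a).trace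
      map_add' := by intro x y; simp [add_mul]
      map_smul' := by intro r x; simp [Matrix.smul_mul] }
  have hr : Module.finrank ℂ V ≤ d ^ 2 := by
    refine le_trans (Submodule.finrank_le V) ?_
    simp [Module.finrank_matrix, pow_two]
  obtain ⟨m, lam, c, h1, h2⟩ := aux_expansion (Φ.restrict hinv) f ⟨b, hbV⟩ (d ^ 2) hr
  refine ⟨m, lam, c, h1, ?_⟩
  intro n hn
  have hcoe : ((((Φ.restrict hinv) ^ n) ⟨b, hbV⟩ : V) : Matrix (Fin d) (Fin d) ℂ)
      = (Φ ^ n) b := by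
    rw [Module.End.pow_restrict]
    rfl
  have hfeq : f (((Φ.restrict hinv) ^ n) ⟨b, hbV⟩) = ((Φ ^ n) b * a).trace := by
    show (((((Φ.restrict hinv) ^ n) ⟨b, hbV⟩ : V) : Matrix (Fin d) (Fin d) ℂ) * a).trace = _
    rw [hcoe]
  rw [← hfeq]
  exact h2 n hn
end

section
/- Let D ≥ 1, χ ≥ 1 and N : Fin D → Fin D → Matrix (Fin χ) (Fin χ) ℂ. Then the following are equivalent: (i) for all i, j : Fin D, ∑_k N i k * (N j k)ᴴ = (1/D) · (if i = j then 1 else 0) · (1 : Matrix (Fin χ) (Fin χ) ℂ); (ii) the matrix 𝒩 : Matrix (Fin D × Fin χ) (Fin D × Fin χ) ℂ with entries 𝒩[(i,a),(k,c)] = Real.sqrt D · (N i k)[a,c], obtained by grouping one physical leg with one virtual leg each, is unitary. -/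
open Matrix

/-- The solvability condition `∑_k N^{i,k} (N^{j,k})ᴴ = (1/D) δ_{ij} 𝟙` on the local MPS
tensor is equivalent to unitarity of the matrix obtained by grouping one physical leg with
one virtual leg each (up to the scale factor `√D`). -/
theorem solvable_iff_grouped_unitary (D χ : ℕ) (hD : 1 ≤ D) (hχ : 1 ≤ χ)
    (N : Fin D → Fin D → Matrix (Fin χ) (Fin χ) ℂ) :
    (∀ i j : Fin D, ∑ k : Fin D, N i k * (N j k)ᴴ =
        (if i = j then (1 / (D : ℂ)) else 0) • (1 : Matrix (Fin χ) (Fin χ) ℂ)) ↔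
    IsUnitary (Matrix.of fun p q : Fin D × Fin χ =>
      ((Real.sqrt D : ℝ) : ℂ) * N p.1 q.1 p.2 q.2) := by
  have hD0 : (D : ℂ) ≠ 0 := Nat.cast_ne_zero.mpr (by omega)
  set M : Matrix (Fin D × Fin χ) (Fin D × Fin χ) ℂ :=
    Matrix.of fun p q : Fin D × Fin χ =>
      ((Real.sqrt D : ℝ) : ℂ) * N p.1 q.1 p.2 q.2 with hM
  have hsq : ((Real.sqrt D : ℝ) : ℂ) * ((Real.sqrt D : ℝ) : ℂ) = (D : ℂ) := by
    rw [← Complex.ofReal_mul, Real.mul_self_sqrt (Nat.cast_nonneg D)]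
    norm_cast
  have hMM : ∀ (i j : Fin D) (a b : Fin χ),
      (M * Mᴴ) (i, a) (j, b) = (D : ℂ) * (∑ k : Fin D, N i k * (N j k)ᴴ) a b := by
    intro i j a b
    simp only [Matrix.mul_apply, Matrix.conjTranspose_apply, Matrix.sum_apply,
      Fintype.sum_prod_type, hM, Matrix.of_apply, star_mul', Complex.star_def,
      Complex.conj_ofReal, Finset.mul_sum]
    refine Finset.sum_congr rfl fun k _ => Finset.sum_congr rfl fun c _ => ?_
    rw [← hsq]; ring
  have key : (∀ i j : Fin D, ∑ k : Fin D, N i k * (N j k)ᴴ =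
      (if i = j then (1 / (D : ℂ)) else 0) • (1 : Matrix (Fin χ) (Fin χ) ℂ)) ↔
      M * Mᴴ = 1 := by
    constructor
    · intro h
      ext ⟨i, a⟩ ⟨j, b⟩
      rw [hMM i j a b, h i j]
      simp only [Matrix.smul_apply, Matrix.one_apply, smul_eq_mul, Prod.mk.injEq]
      by_cases hij : i = j <;> by_cases hab : a = b <;>
        simp [hij, hab, hD0] <;> field_simp
    · intro h i j
      ext a b
      have := congrFun (congrFun h (i, a)) (j, b)
      rw [hMM i j a b] at this
      simp only [Matrix.smul_apply, Matrix.one_apply, smul_eq_mul, Prod.mk.injEq] at this ⊢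
      have hr : (D : ℂ) * ((if i = j then (1 / (D : ℂ)) else 0) * (if a = b then 1 else 0))
          = if i = j ∧ a = b then 1 else 0 := by
        by_cases hij : i = j <;> by_cases hab : a = b <;> simp [hij, hab] <;> field_simp
      exact mul_left_cancel₀ hD0 (this.trans hr.symm)
  rw [key]
  constructor
  · intro h; exact ⟨h, mul_eq_one_comm.mp h⟩
  · rintro ⟨h, -⟩; exact h
end

section
/- For every J ∈ ℝ, the single-site map of the gate V(J) acts diagonally on the Pauli basis: ℳ₋^{V(J)}(1) = 1, ℳ₋^{V(J)}(σx) = sin(2J) · σx, ℳ₋^{V(J)}(σy) = sin(2J) · σy, and ℳ₋^{V(J)}(σz) = σz. -/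
open Matrix Complex

/-- Pauli matrix σx. -/
def sigmaX : Matrix (Fin 2) (Fin 2) ℂ := !![0, 1; 1, 0]

/-- Pauli matrix σy. -/
def sigmaY : Matrix (Fin 2) (Fin 2) ℂ := !![0, -I; I, 0]

/-- Pauli matrix σz. -/
def sigmaZ : Matrix (Fin 2) (Fin 2) ℂ := !![1, 0; 0, -1]

/-- Kronecker product of two `2 × 2` matrices, reindexed to `Fin 2 × Fin 2`. -/
def kron (a b : Matrix (Fin 2) (Fin 2) ℂ) : Matrix (Fin 2 × Fin 2) (Fin 2 × Fin 2) ℂ :=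
  Matrix.of fun p q => a p.1 q.1 * b p.2 q.2

/-- The dual unitary gate `V(J) = exp(−i((π/4)(σx⊗σx + σy⊗σy) + J σz⊗σz))`. -/
noncomputable def VJ (J : ℝ) : Matrix (Fin 2 × Fin 2) (Fin 2 × Fin 2) ℂ :=
  NormedSpace.exp
    (-(I • (((Real.pi / 4 : ℝ) : ℂ) • (kron sigmaX sigmaX + kron sigmaY sigmaY) +
      ((J : ℝ) : ℂ) • kron sigmaZ sigmaZ)))

/-- The single-site map `ℳ₋ᴰ` of a two-site gate `D` on `d`-dimensional sites:
`ℳ₋ᴰ(a)[i,j] = (1/d) ∑_k (Dᴴ (1 ⊗ a) D)[(i,k),(j,k)]`. -/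
noncomputable def Mminus {d : ℕ} (D : Matrix (Fin d × Fin d) (Fin d × Fin d) ℂ)
    (a : Matrix (Fin d) (Fin d) ℂ) : Matrix (Fin d) (Fin d) ℂ :=
  Matrix.of fun i j =>
    (1 / (d : ℂ)) * ∑ k : Fin d,
      (Dᴴ * (Matrix.of fun p q : Fin d × Fin d =>
          (if p.1 = q.1 then (1 : ℂ) else 0) * a p.2 q.2) * D) (i, k) (j, k)

/-!
Both terms of the Hamiltonian of `V(J)` live in the commutative algebra generated by the swap
`S` and the diagonal matrix `σz ⊗ σz`: indeed `σx ⊗ σx + σy ⊗ σy = 2 S - 1 - σz ⊗ σz`. Since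
`S² = 1`, `exp (-(π/2) i S) = -i S`, so `V(J) = S · diag(c)` with the phases
`c(i,k) = e^{-iJ}` for `i = k` and `-i e^{iJ}` otherwise. For any gate of the form `S · diag(c)`
the swap moves `1 ⊗ a` to `a ⊗ 1`, so `ℳ₋` is the Schur multiplier by the Gram matrix
`(1/d) ∑ₖ c̄(i,k) c(j,k)`; here that matrix is `!![1, sin 2J; sin 2J, 1]`, while `1, σz` are
diagonal and `σx, σy` off-diagonal.
-/

open scoped Matrix ComplexConjugate

/-- `(1 ± u) / 2` are complementary idempotents, so `(a, b) ↦ a (1 + u) / 2 + b (1 - u) / 2` is a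
ring homomorphism `ℂ × ℂ →+* A`, and it commutes with `exp`. -/
theorem NormedSpace.exp_smul_of_mul_self_eq_one {A : Type*} [NormedRing A] [NormedAlgebra ℂ A]
    [Algebra ℚ A] {u : A} (hu : u * u = 1) (z : ℂ) :
    NormedSpace.exp (z • u) = cosh z • (1 : A) + sinh z • u := by
  let φ : ℂ × ℂ →+* A :=
    { toFun := fun x => ((x.1 + x.2) / 2) • (1 : A) + ((x.1 - x.2) / 2) • u
      map_one' := by simp
      map_mul' := fun x y => by
        simp only [Prod.fst_mul, Prod.snd_mul, add_mul, mul_add, smul_mul_smul, one_mul, mul_one,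
          hu]
        module
      map_zero' := by simp
      map_add' := fun x y => by simp only [Prod.fst_add, Prod.snd_add]; module }
  have hφ : Continuous φ := by
    show Continuous fun x : ℂ × ℂ => ((x.1 + x.2) / 2) • (1 : A) + ((x.1 - x.2) / 2) • u
    fun_prop
  have hzu : z • u = φ (z, -z) := by
    show _ = ((z + -z) / 2) • (1 : A) + ((z - -z) / 2) • u
    module
  have hexp : NormedSpace.exp (z, -z) = (Complex.exp z, Complex.exp (-z)) := by
    ext <;> simp [Complex.exp_eq_exp_ℂ]
  rw [hzu, ← NormedSpace.map_exp φ hφ, hexp]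
  rfl

section SwapMatrix

variable {n R : Type*} [Fintype n] [DecidableEq n] [Semiring R]

variable (n R) in
def swapMatrix : Matrix (n × n) (n × n) R := (1 : Matrix (n × n) (n × n) R).submatrix Prod.swap id

theorem swapMatrix_mul {m : Type*} (M : Matrix (n × n) m R) :
    swapMatrix n R * M = M.submatrix Prod.swap id := by
  ext p q
  simp [swapMatrix, mul_apply, one_apply]

theorem mul_swapMatrix {m : Type*} (M : Matrix m (n × n) R) :
    M * swapMatrix n R = M.submatrix id Prod.swap := by
  ext p q
  simp [swapMatrix, mul_apply, one_apply, Prod.swap_eq_iff_eq_swap]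

theorem swapMatrix_mul_swapMatrix : swapMatrix n R * swapMatrix n R = 1 := by
  rw [swapMatrix_mul, swapMatrix, submatrix_submatrix]
  simp

theorem commute_swapMatrix_diagonal {f : n × n → R} (hf : ∀ p, f p.swap = f p) :
    Commute (swapMatrix n R) (diagonal f) := by
  rw [Commute, SemiconjBy, swapMatrix_mul, mul_swapMatrix]
  ext p q
  simp [diagonal_apply, Prod.swap_eq_iff_eq_swap, hf]

end SwapMatrix

theorem Matrix.exp_smul_swapMatrix {n : Type*} [Fintype n] [DecidableEq n] (z : ℂ) :
    NormedSpace.exp (z • swapMatrix n ℂ) = cosh z • (1 : Matrix (n × n) (n × n) ℂ) +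
      sinh z • swapMatrix n ℂ := by
  let _ := Matrix.linftyOpNormedRing (n := n × n) (α := ℂ)
  let _ := Matrix.linftyOpNormedAlgebra (n := n × n) (R := ℂ) (α := ℂ)
  exact NormedSpace.exp_smul_of_mul_self_eq_one swapMatrix_mul_swapMatrix z

/-- `(diagonal c).submatrix Prod.swap id` is the gate `SWAP · diagonal c`. -/
theorem Mminus_diagonal_submatrix_swap {d : ℕ} (c : Fin d × Fin d → ℂ)
    (a : Matrix (Fin d) (Fin d) ℂ) :
    Mminus ((diagonal c).submatrix Prod.swap id) a =
      (of fun i j => (1 / (d : ℂ)) * ∑ k, star (c (i, k)) * c (j, k)) ⊙ a := by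
  ext i j
  simp [Mminus, mul_apply, diagonal_apply, hadamard_apply, Fintype.sum_prod_type, Finset.mul_sum,
    Prod.ext_iff, ite_and, mul_comm, mul_left_comm]

/-- This is `σx ⊗ σx + σy ⊗ σy = 2 S - 1 - σz ⊗ σz` with `σz ⊗ σz` written as a diagonal. -/
theorem VJ_generator_eq (J : ℝ) :
    -(I • (((Real.pi / 4 : ℝ) : ℂ) • (kron sigmaX sigmaX + kron sigmaY sigmaY) +
      ((J : ℝ) : ℂ) • kron sigmaZ sigmaZ)) =
    (-(Real.pi / 2) * I : ℂ) • swapMatrix (Fin 2) ℂ +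
      diagonal fun p => if p.1 = p.2 then (Real.pi / 2 - J) * I else J * I := by
  ext ⟨i, k⟩ ⟨j, l⟩
  fin_cases i <;> fin_cases k <;> fin_cases j <;> fin_cases l <;>
    simp [kron, sigmaX, sigmaY, sigmaZ, swapMatrix, one_apply] <;> ring

noncomputable def isingPhase (J : ℝ) (p : Fin 2 × Fin 2) : ℂ :=
  if p.1 = p.2 then Complex.exp (-(J * I)) else -I * Complex.exp (J * I)

theorem VJ_eq (J : ℝ) : VJ J = (diagonal (isingPhase J)).submatrix Prod.swap id := by
  have hcomm := (commute_swapMatrix_diagonal (R := ℂ)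
    (f := fun p : Fin 2 × Fin 2 => if p.1 = p.2 then (Real.pi / 2 - J) * I else J * I)
    (fun p => by simp [eq_comm])).smul_left (-(Real.pi / 2) * I : ℂ)
  have hswap : NormedSpace.exp ((-(Real.pi / 2) * I : ℂ) • swapMatrix (Fin 2) ℂ) =
      -I • swapMatrix (Fin 2) ℂ := by
    rw [Matrix.exp_smul_swapMatrix, cosh_mul_I, sinh_mul_I]
    simp
  have hphase : -(I * Complex.exp ((Real.pi / 2 - J) * I)) = Complex.exp (-(J * I)) := by
    rw [sub_mul, Complex.exp_sub, Complex.exp_pi_div_two_mul_I, Complex.exp_neg]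
    field_simp
    simp
  rw [VJ, VJ_generator_eq, Matrix.exp_add_of_commute _ _ hcomm, hswap, Matrix.exp_diagonal,
    smul_mul_assoc, swapMatrix_mul]
  ext p q
  simp [isingPhase, diagonal_apply, ← Complex.exp_eq_exp_ℂ, eq_comm (a := p.2)]
  split_ifs <;> simp [hphase]

theorem isingPhase_gram (J : ℝ) :
    (of fun i j => (1 / ((2 : ℕ) : ℂ)) * ∑ k, star (isingPhase J (i, k)) * isingPhase J (j, k)) =
      !![1, ((Real.sin (2 * J) : ℝ) : ℂ); ((Real.sin (2 * J) : ℝ) : ℂ), 1] := by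
  have hconj : conj (Complex.exp (J * I)) = Complex.exp (-(J * I)) := by
    rw [← Complex.exp_conj, map_mul, conj_ofReal, conj_I, mul_neg]
  have hconj' : conj (Complex.exp (-(J * I))) = Complex.exp (J * I) := by
    rw [← hconj, Complex.conj_conj]
  have hinv : Complex.exp (-(J * I)) * Complex.exp (J * I) = 1 := by
    rw [← Complex.exp_add, neg_add_cancel, Complex.exp_zero]
  have hsin : ((Real.sin (2 * J) : ℝ) : ℂ) =
      (Complex.exp (-(J * I)) ^ 2 - Complex.exp (J * I) ^ 2) * I / 2 := by
    rw [ofReal_sin, Complex.sin, ← Complex.exp_nat_mul, ← Complex.exp_nat_mul]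
    push_cast
    ring_nf
  ext i j
  fin_cases i <;> fin_cases j <;> simp [isingPhase, Fin.sum_univ_two, hconj, hconj', hsin]
  · linear_combination (1 - I ^ 2) / 2 * hinv - 1 / 2 * I_sq
  · ring
  · ring
  · linear_combination (1 - I ^ 2) / 2 * hinv - 1 / 2 * I_sq

/-- The single-site map of `V(J)` acts diagonally on the Pauli basis. -/
theorem Mminus_VJ_pauli (J : ℝ) :
    Mminus (VJ J) 1 = 1 ∧
    Mminus (VJ J) sigmaX = ((Real.sin (2 * J) : ℝ) : ℂ) • sigmaX ∧
    Mminus (VJ J) sigmaY = ((Real.sin (2 * J) : ℝ) : ℂ) • sigmaY ∧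
    Mminus (VJ J) sigmaZ = sigmaZ := by
  have hschur (a : Matrix (Fin 2) (Fin 2) ℂ) : Mminus (VJ J) a =
      !![1, ((Real.sin (2 * J) : ℝ) : ℂ); ((Real.sin (2 * J) : ℝ) : ℂ), 1] ⊙ a := by
    rw [VJ_eq, Mminus_diagonal_submatrix_swap, isingPhase_gram]
  simp only [hschur]
  refine ⟨?_, ?_, ?_, ?_⟩ <;> ext i j <;> fin_cases i <;> fin_cases j <;>
    simp [hadamard_apply, sigmaX, sigmaY, sigmaZ]
end

section
/- Let u₊, u₋, v₊, v₋ be unitary 2×2 complex matrices, J ∈ ℝ, and let D = (u₊ ⊗ v₊) * V(J) * (u₋ ⊗ v₋) (Kronecker products reindexed to Fin 2 × Fin 2). Then for every a : Matrix (Fin 2) (Fin 2) ℂ, ℳ₋ᴰ(a) = u₋ᴴ * ℳ₋^{V(J)}(v₊ᴴ * a * v₊) * u₋. -/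
open Matrix Complex

/-!
Write `ℳ₋ᴰ(a)` as `1/d` times the partial trace over the right leg of `Dᴴ (1 ⊗ a) D`. The outer
factor `u₊ ⊗ v₊` conjugates `1 ⊗ a` into `1 ⊗ v₊ᴴ a v₊`, because `u₊ᴴ u₊ = 1`. The inner factor
`u₋ ⊗ v₋` passes through the partial trace as conjugation by `u₋`: `v₋` acts on the traced leg, so
by cyclicity of that trace it cancels against `v₋ᴴ`.
-/

open scoped Kronecker

namespace Matrix

variable {m n R : Type*} [Fintype m] [Fintype n]

def traceRight [AddCommMonoid R] (Y : Matrix (m × n) (m × n) R) : Matrix m m R :=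
  of fun i j => ∑ k, Y (i, k) (j, k)

section CommSemiring

variable [CommSemiring R]

theorem traceRight_kronecker_one_mul [DecidableEq n] (A : Matrix m m R)
    (Y : Matrix (m × n) (m × n) R) :
    traceRight ((A ⊗ₖ (1 : Matrix n n R)) * Y) = A * traceRight Y := by
  ext i j
  simp only [traceRight, mul_apply, kroneckerMap_apply, one_apply, mul_ite, mul_one, mul_zero,
    ite_mul, zero_mul, Fintype.sum_prod_type, Finset.sum_ite_eq, Finset.mem_univ, ↓reduceIte,
    of_apply, Finset.mul_sum]
  rw [Finset.sum_comm]

theorem traceRight_mul_kronecker_one [DecidableEq n] (B : Matrix m m R)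
    (Y : Matrix (m × n) (m × n) R) :
    traceRight (Y * (B ⊗ₖ (1 : Matrix n n R))) = traceRight Y * B := by
  ext i j
  simp only [traceRight, mul_apply, kroneckerMap_apply, one_apply, mul_ite, mul_one, mul_zero,
    Fintype.sum_prod_type, Finset.sum_ite_eq', Finset.mem_univ, ↓reduceIte, of_apply,
    Finset.sum_mul]
  rw [Finset.sum_comm]

theorem traceRight_one_kronecker_mul [DecidableEq m] (B : Matrix n n R)
    (Y : Matrix (m × n) (m × n) R) :
    traceRight (((1 : Matrix m m R) ⊗ₖ B) * Y) = traceRight (Y * (1 ⊗ₖ B)) := by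
  ext i j
  simp only [traceRight, mul_apply, kroneckerMap_apply, one_apply, ite_mul, one_mul, zero_mul,
    Fintype.sum_prod_type, Finset.sum_ite_irrel, Finset.sum_const_zero, Finset.sum_ite_eq,
    Finset.mem_univ, ↓reduceIte, of_apply, mul_ite, mul_zero, Finset.sum_ite_eq']
  rw [Finset.sum_comm]
  exact Finset.sum_congr rfl fun k _ => Finset.sum_congr rfl fun l _ => mul_comm _ _

end CommSemiring

theorem traceRight_conjTranspose_kronecker_mul_mul [DecidableEq m] [DecidableEq n]
    [CommSemiring R] [StarRing R] (u : Matrix m m R) {v : Matrix n n R} (hv : v * vᴴ = 1)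
    (Y : Matrix (m × n) (m × n) R) :
    traceRight ((u ⊗ₖ v)ᴴ * Y * (u ⊗ₖ v)) = uᴴ * traceRight Y * u := by
  have split_left : (u ⊗ₖ v)ᴴ = (uᴴ ⊗ₖ 1) * (1 ⊗ₖ vᴴ) := by
    rw [conjTranspose_kronecker, ← mul_kronecker_mul, mul_one, one_mul]
  have split_right : u ⊗ₖ v = (1 ⊗ₖ v) * (u ⊗ₖ 1) := by
    rw [← mul_kronecker_mul, mul_one, one_mul]
  calc traceRight ((u ⊗ₖ v)ᴴ * Y * (u ⊗ₖ v))
      = traceRight ((uᴴ ⊗ₖ 1) * ((1 ⊗ₖ vᴴ) * (Y * (1 ⊗ₖ v))) * (u ⊗ₖ 1)) := by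
        rw [split_left, split_right]
        simp only [Matrix.mul_assoc]
    _ = uᴴ * traceRight ((1 ⊗ₖ vᴴ) * (Y * (1 ⊗ₖ v))) * u := by
        rw [traceRight_mul_kronecker_one, traceRight_kronecker_one_mul]
    _ = uᴴ * traceRight Y * u := by
        rw [traceRight_one_kronecker_mul, Matrix.mul_assoc Y, ← mul_kronecker_mul, one_mul, hv,
          one_kronecker_one, Matrix.mul_one]

end Matrix

open Matrix

theorem Mminus_eq_smul_traceRight {d : ℕ} (D : Matrix (Fin d × Fin d) (Fin d × Fin d) ℂ)
    (a : Matrix (Fin d) (Fin d) ℂ) :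
    Mminus D a = (1 / (d : ℂ)) • traceRight (Dᴴ * (1 ⊗ₖ a) * D) := by
  have one_kronecker : (of fun p q : Fin d × Fin d =>
      (if p.1 = q.1 then (1 : ℂ) else 0) * a p.2 q.2) = 1 ⊗ₖ a := by
    ext p q
    simp [one_apply]
  rw [Mminus, one_kronecker]
  rfl

theorem Mminus_kronecker_mul_mul_kronecker {d : ℕ} {uP uM vP vM : Matrix (Fin d) (Fin d) ℂ}
    (huP : uPᴴ * uP = 1) (hvM : vM * vMᴴ = 1) (V : Matrix (Fin d × Fin d) (Fin d × Fin d) ℂ)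
    (a : Matrix (Fin d) (Fin d) ℂ) :
    Mminus ((uP ⊗ₖ vP) * V * (uM ⊗ₖ vM)) a = uMᴴ * Mminus V (vPᴴ * a * vP) * uM := by
  have conj_one_kronecker : (uP ⊗ₖ vP)ᴴ * (1 ⊗ₖ a) * (uP ⊗ₖ vP) = 1 ⊗ₖ (vPᴴ * a * vP) := by
    rw [conjTranspose_kronecker, ← mul_kronecker_mul, ← mul_kronecker_mul, Matrix.mul_one, huP]
  have conj_D : ((uP ⊗ₖ vP) * V * (uM ⊗ₖ vM))ᴴ * (1 ⊗ₖ a) * ((uP ⊗ₖ vP) * V * (uM ⊗ₖ vM)) =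
      (uM ⊗ₖ vM)ᴴ * (Vᴴ * (1 ⊗ₖ (vPᴴ * a * vP)) * V) * (uM ⊗ₖ vM) := by
    rw [← conj_one_kronecker]
    simp only [conjTranspose_mul, Matrix.mul_assoc]
  rw [Mminus_eq_smul_traceRight, Mminus_eq_smul_traceRight, conj_D,
    traceRight_conjTranspose_kronecker_mul_mul _ hvM, Matrix.mul_smul, Matrix.smul_mul]

theorem Mminus_parametrized_general (uP uM vP vM : Matrix (Fin 2) (Fin 2) ℂ)
    (huP : IsUnitary uP) (hvM : IsUnitary vM)
    (J : ℝ) (a : Matrix (Fin 2) (Fin 2) ℂ) :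
    Mminus (kron uP vP * VJ J * kron uM vM) a =
      uMᴴ * Mminus (VJ J) (vPᴴ * a * vP) * uM :=
  Mminus_kronecker_mul_mul_kronecker huP.2 hvM.1 (VJ J) a

/-- For a dual unitary gate in the canonical parametrization
`D = (uP ⊗ vP) V(J) (uM ⊗ vM)`, the single-site map factors through rotations:
`ℳ₋ᴰ(a) = uMᴴ ℳ₋^{V(J)}(vPᴴ a vP) uM`. -/
theorem Mminus_parametrized (uP uM vP vM : Matrix (Fin 2) (Fin 2) ℂ)
    (huP : IsUnitary uP) (huM : IsUnitary uM) (hvP : IsUnitary vP) (hvM : IsUnitary vM)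
    (J : ℝ) (a : Matrix (Fin 2) (Fin 2) ℂ) :
    Mminus (kron uP vP * VJ J * kron uM vM) a =
      uMᴴ * Mminus (VJ J) (vPᴴ * a * vP) * uM :=
  Mminus_parametrized_general uP uM vP vM huP hvM J a
end
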